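/- arXiv:1401.6785 — 6 statements merged into one kernel-verified Lean document; each statement's English description precedes it below -/
import Mathlib

section
/- Define H(0, s, m) = s and H(d+1, s, m) = s·(m·2^{H(d,s,m)})^{d+1} + H(d, s, m), and H′(d, s, m) = 4(d+1)(s+m+1)·H(d, s, m). Then for all natural numbers d, m ≥ 0 and s ≥ 1, H′(d+1, s, m) ≤ 2^{H′(d, s, m)}. -/
/-- `H 0 s m = s` and `H (d+1) s m = s * (m * 2 ^ H d s m) ^ (d+1) + H d s m`. -/
def H : ℕ → ℕ → ℕ → ℕ
  | 0, s, _ => s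
  | d + 1, s, m => s * (m * 2 ^ H d s m) ^ (d + 1) + H d s m

/-- `H' d s m = 4 * (d+1) * (s+m+1) * H d s m`. -/
def H' (d s m : ℕ) : ℕ := 4 * (d + 1) * (s + m + 1) * H d s m

/-!
Bound every factor of `H' (d+1) s m = 4(d+2)(s+m+1) H(d+1,s,m)` by a power of two using
`n < 2 ^ n`; with `h = H d s m`, the last factor is at most `(s+1) 2^((m+h)(d+1)) ≤ 2^(s+(m+h)(d+1))`.
The resulting exponent is linear in each of `d, s, m, h`, and since `1 ≤ s ≤ h` it is dominated by
`H' d s m = 4(d+1)(s+m+1) h`.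
-/

lemma le_H (d s m : ℕ) : s ≤ H d s m := by
  induction d with
  | zero => rfl
  | succ d ih => exact ih.trans (Nat.le_add_left _ _)

lemma H_succ_le_two_pow (d s m : ℕ) : H (d + 1) s m ≤ 2 ^ (s + (m + H d s m) * (d + 1)) := by
  set h := H d s m
  set Y := 2 ^ ((m + h) * (d + 1)) with hY
  have hm : (m * 2 ^ h) ^ (d + 1) ≤ Y := by
    rw [hY, add_mul, pow_add 2, pow_mul, pow_mul, ← mul_pow]
    exact Nat.pow_le_pow_left (Nat.mul_le_mul_right _ Nat.lt_two_pow_self.le) _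
  have hh : h < Y :=
    Nat.lt_two_pow_self.trans_le (Nat.pow_le_pow_right two_pos (by nlinarith))
  calc H (d + 1) s m = s * (m * 2 ^ h) ^ (d + 1) + h := rfl
    _ ≤ (s + 1) * Y := by nlinarith
    _ ≤ 2 ^ s * Y := Nat.mul_le_mul_right _ Nat.lt_two_pow_self
    _ = 2 ^ (s + (m + h) * (d + 1)) := (pow_add _ _ _).symm

lemma exponent_le {d s m h : ℕ} (hs : 1 ≤ s) (hsh : s ≤ h) :
    d + 3 + (s + m) + (s + (m + h) * (d + 1)) ≤ 4 * (d + 1) * (s + m + 1) * h := by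
  nlinarith [Nat.mul_le_mul hs hsh, Nat.mul_le_mul_left (m * (d + 1)) (hs.trans hsh)]

/-- For all `d, m ≥ 0` and `s ≥ 1`, `H' (d+1) s m ≤ 2 ^ H' d s m`. -/
theorem H'_succ_le (d m s : ℕ) (hs : 1 ≤ s) :
    H' (d + 1) s m ≤ 2 ^ H' d s m := by
  have h4 : 4 * (d + 2) ≤ 2 ^ (d + 3) := by
    rw [pow_succ', pow_succ']
    have := @Nat.lt_two_pow_self (d + 1)
    omega
  calc H' (d + 1) s m = 4 * (d + 2) * (s + m + 1) * H (d + 1) s m := rfl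
    _ ≤ 2 ^ (d + 3) * 2 ^ (s + m) * 2 ^ (s + (m + H d s m) * (d + 1)) :=
      Nat.mul_le_mul (Nat.mul_le_mul h4 Nat.lt_two_pow_self) (H_succ_le_two_pow d s m)
    _ = 2 ^ (d + 3 + (s + m) + (s + (m + H d s m) * (d + 1))) := by simp only [pow_add]
    _ ≤ 2 ^ H' d s m := Nat.pow_le_pow_right two_pos (exponent_le hs (le_H d s m))
end

section
/- If an ABVASS A = (Q, d, T_u, T_f, T_s, ∅) has a (q_r, v₀)-rooted Q_ℓ-leaf-covering deduction tree, then it has such a deduction tree of height at most H(d, |Q|, max⁻(T_u)). -/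
/-- An alternating branching VASS with full zero tests (ABVASS₀):
states `Q`, counters indexed by `ι`, with unary, fork, split, and
full-zero-test rules. -/
structure ABVASS (Q ι : Type) where
  Tu : Set (Q × (ι → ℤ) × Q)
  Tf : Set (Q × Q × Q)
  Ts : Set (Q × Q × Q)
  Tz : Set (Q × Q)

/-- Configurations: a state together with a vector of naturals. -/
abbrev Config (Q ι : Type) := Q × (ι → ℕ)

/-- Finite deduction trees labelled by configurations, with unary and
binary internal nodes. -/
inductive DTree (Q ι : Type) where
  | leaf : Config Q ι → DTree Q ι
  | node1 : Config Q ι → DTree Q ι → DTree Q ι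
  | node2 : Config Q ι → DTree Q ι → DTree Q ι → DTree Q ι

namespace DTree

variable {Q ι : Type}

/-- The root label of a deduction tree. -/
def root : DTree Q ι → Config Q ι
  | .leaf c => c
  | .node1 c _ => c
  | .node2 c _ _ => c

/-- Height: the maximum number of edges from the root to a leaf. -/
def height : DTree Q ι → ℕ
  | .leaf _ => 0
  | .node1 _ t => t.height + 1
  | .node2 _ t₁ t₂ => max t₁.height t₂.height + 1

/-- The list of leaf labels. -/
def leaves : DTree Q ι → List (Config Q ι)
  | .leaf c => [c]
  | .node1 _ t => t.leaves
  | .node2 _ t₁ t₂ => t₁.leaves ++ t₂.leaves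

end DTree

variable {Q ι : Type}

/-- Unary rule, applied top-down: from `(q, v)` derive `(q₁, v + u)`,
provided `v + u` is non-negative. -/
def UnaryStep (A : ABVASS Q ι) (c c' : Config Q ι) : Prop :=
  ∃ u, (c.1, u, c'.1) ∈ A.Tu ∧ ∀ i, (c'.2 i : ℤ) = (c.2 i : ℤ) + u i

/-- Full zero test: from `(q, 0)` derive `(q₁, 0)`. -/
def ZeroStep (A : ABVASS Q ι) (c c' : Config Q ι) : Prop :=
  (c.1, c'.1) ∈ A.Tz ∧ c.2 = (fun _ => 0) ∧ c'.2 = (fun _ => 0)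

/-- Fork (children copy the parent's vector) or split (the parent's
vector is a sum of the children's). -/
def BinStep (A : ABVASS Q ι) (c c₁ c₂ : Config Q ι) : Prop :=
  ((c.1, c₁.1, c₂.1) ∈ A.Tf ∧ c₁.2 = c.2 ∧ c₂.2 = c.2) ∨
  ((c.1, c₁.1, c₂.1) ∈ A.Ts ∧ c.2 = c₁.2 + c₂.2)

/-- A tree is a valid deduction tree when every internal node's children
are obtained by one of the permitted steps. -/
inductive ValidTree (step1 : Config Q ι → Config Q ι → Prop)
    (step2 : Config Q ι → Config Q ι → Config Q ι → Prop) : DTree Q ι → Prop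
  | leaf (c : Config Q ι) : ValidTree step1 step2 (.leaf c)
  | one {c : Config Q ι} {t : DTree Q ι} :
      step1 c t.root → ValidTree step1 step2 t → ValidTree step1 step2 (.node1 c t)
  | two {c : Config Q ι} {t₁ t₂ : DTree Q ι} :
      step2 c t₁.root t₂.root → ValidTree step1 step2 t₁ → ValidTree step1 step2 t₂ →
      ValidTree step1 step2 (.node2 c t₁ t₂)

/-- Deduction trees of an ABVASS₀ (standard semantics). -/
def IsDeduction (A : ABVASS Q ι) : DTree Q ι → Prop :=
  ValidTree (fun c c' => UnaryStep A c c' ∨ ZeroStep A c c') (BinStep A)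

/-!
Rackoff's argument, by induction on the set `S` of counters that are tracked (the others
behave as `ω`). Let `h(c)` be the least height of a covering tree rooted at `c`, and
`B = m * 2 ^ H (|S| - 1)`. If some counter `i ∈ S` of `c` is at least `B`, a tree of height at
most `H (|S| - 1)` that ignores `i` can be lifted to one that tracks it, so
`h(c) ≤ H (|S| - 1)`. Otherwise, a tree of minimal height has a child `c'` with
`h(c') = h(c) - 1`, so every value between `H (|S| - 1)` and `h(c)` is the minimal height of a
configuration whose counters in `S` are all below `B`. As `h` depends only on the state and the
counters in `S`, there are at most `|Q| * B ^ |S|` such values.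
-/

namespace DTree

def setRoot (c : Config Q ι) : DTree Q ι → DTree Q ι
  | .leaf _ => .leaf c
  | .node1 _ t => .node1 c t
  | .node2 _ t₁ t₂ => .node2 c t₁ t₂

@[simp] lemma root_setRoot (c : Config Q ι) (D : DTree Q ι) : (D.setRoot c).root = c := by
  cases D <;> rfl

@[simp] lemma height_setRoot (c : Config Q ι) (D : DTree Q ι) :
    (D.setRoot c).height = D.height := by
  cases D <;> rfl

end DTree

lemma ValidTree.mono {s₁ s₁' : Config Q ι → Config Q ι → Prop}
    {s₂ s₂' : Config Q ι → Config Q ι → Config Q ι → Prop}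
    (h₁ : ∀ c c', s₁ c c' → s₁' c c') (h₂ : ∀ c c₁ c₂, s₂ c c₁ c₂ → s₂' c c₁ c₂)
    {D : DTree Q ι} (hD : ValidTree s₁ s₂ D) : ValidTree s₁' s₂' D := by
  induction hD with
  | leaf c => exact .leaf c
  | one hs _ ih => exact .one (h₁ _ _ hs) ih
  | two hs _ _ ih₁ ih₂ => exact .two (h₂ _ _ _ hs) ih₁ ih₂

section CoveringTrees

variable (s₁ : Config Q ι → Config Q ι → Prop) (s₂ : Config Q ι → Config Q ι → Config Q ι → Prop)
  (Qℓ : Set Q)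

def IsCoveringTree (D : DTree Q ι) : Prop :=
  ValidTree s₁ s₂ D ∧ ∀ l ∈ D.leaves, l.1 ∈ Qℓ

def Coverable (c : Config Q ι) : Prop :=
  ∃ D, IsCoveringTree s₁ s₂ Qℓ D ∧ D.root = c

/-- This is `0` when `c` is not coverable. -/
noncomputable def minHeight (c : Config Q ι) : ℕ :=
  sInf {h | ∃ D, IsCoveringTree s₁ s₂ Qℓ D ∧ D.root = c ∧ D.height = h}

variable {s₁ s₂ Qℓ}

@[simp] lemma isCoveringTree_leaf {c : Config Q ι} :
    IsCoveringTree s₁ s₂ Qℓ (.leaf c) ↔ c.1 ∈ Qℓ := by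
  simp [IsCoveringTree, DTree.leaves, ValidTree.leaf]

@[simp] lemma isCoveringTree_node1 {c : Config Q ι} {t : DTree Q ι} :
    IsCoveringTree s₁ s₂ Qℓ (.node1 c t) ↔ s₁ c t.root ∧ IsCoveringTree s₁ s₂ Qℓ t := by
  constructor
  · rintro ⟨hv, hl⟩
    cases hv with
    | one hs ht => exact ⟨hs, ht, hl⟩
  · rintro ⟨hs, ht, hl⟩
    exact ⟨.one hs ht, hl⟩

@[simp] lemma isCoveringTree_node2 {c : Config Q ι} {t₁ t₂ : DTree Q ι} :
    IsCoveringTree s₁ s₂ Qℓ (.node2 c t₁ t₂) ↔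
      s₂ c t₁.root t₂.root ∧ IsCoveringTree s₁ s₂ Qℓ t₁ ∧ IsCoveringTree s₁ s₂ Qℓ t₂ := by
  simp only [IsCoveringTree, DTree.leaves, List.mem_append]
  constructor
  · rintro ⟨hv, hl⟩
    cases hv with
    | two hs ht₁ ht₂ =>
      exact ⟨hs, ⟨ht₁, fun l h => hl l (.inl h)⟩, ⟨ht₂, fun l h => hl l (.inr h)⟩⟩
  · rintro ⟨hs, ⟨ht₁, hl₁⟩, ⟨ht₂, hl₂⟩⟩
    exact ⟨.two hs ht₁ ht₂, fun l h => h.elim (hl₁ l) (hl₂ l)⟩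

lemma IsCoveringTree.minHeight_root_le {D : DTree Q ι} (hD : IsCoveringTree s₁ s₂ Qℓ D) :
    minHeight s₁ s₂ Qℓ D.root ≤ D.height :=
  Nat.sInf_le ⟨D, hD, rfl, rfl⟩

lemma Coverable.exists_height_eq_minHeight {c : Config Q ι} (hc : Coverable s₁ s₂ Qℓ c) :
    ∃ D, IsCoveringTree s₁ s₂ Qℓ D ∧ D.root = c ∧ D.height = minHeight s₁ s₂ Qℓ c := by
  obtain ⟨D, hD, rfl⟩ := hc
  exact Nat.sInf_mem (s := {h | ∃ E, IsCoveringTree s₁ s₂ Qℓ E ∧ E.root = D.root ∧ E.height = h})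
    ⟨D.height, D, hD, rfl, rfl⟩

/-- Replacing the children of a tree of minimal height by trees of minimal height cannot make
it shorter, so some child has minimal height exactly one less. -/
lemma Coverable.exists_minHeight_eq_of_minHeight_eq_succ {c : Config Q ι} {h : ℕ}
    (hc : Coverable s₁ s₂ Qℓ c) (hmin : minHeight s₁ s₂ Qℓ c = h + 1) :
    ∃ c', Coverable s₁ s₂ Qℓ c' ∧ minHeight s₁ s₂ Qℓ c' = h := by
  obtain ⟨D, hD, rfl, hheight⟩ := hc.exists_height_eq_minHeight
  rw [hmin] at hheight
  cases D with
  | leaf _ => simp [DTree.height] at hheight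
  | node1 c t =>
    rw [isCoveringTree_node1] at hD
    obtain ⟨hs, ht⟩ := hD
    have hcov : Coverable s₁ s₂ Qℓ t.root := ⟨t, ht, rfl⟩
    obtain ⟨E, hE, hEroot, hEheight⟩ := hcov.exists_height_eq_minHeight
    have hshort := (isCoveringTree_node1.2 ⟨hEroot ▸ hs, hE⟩).minHeight_root_le
    have hle := ht.minHeight_root_le
    simp only [DTree.root, DTree.height] at hshort hheight hmin
    exact ⟨t.root, hcov, by omega⟩
  | node2 c t₁ t₂ =>
    rw [isCoveringTree_node2] at hD
    obtain ⟨hs, ht₁, ht₂⟩ := hD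
    have hcov₁ : Coverable s₁ s₂ Qℓ t₁.root := ⟨t₁, ht₁, rfl⟩
    have hcov₂ : Coverable s₁ s₂ Qℓ t₂.root := ⟨t₂, ht₂, rfl⟩
    obtain ⟨E₁, hE₁, hE₁root, hE₁height⟩ := hcov₁.exists_height_eq_minHeight
    obtain ⟨E₂, hE₂, hE₂root, hE₂height⟩ := hcov₂.exists_height_eq_minHeight
    have hshort :=
      (isCoveringTree_node2.2 ⟨hE₁root ▸ hE₂root ▸ hs, hE₁, hE₂⟩).minHeight_root_le
    have hle₁ := ht₁.minHeight_root_le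
    have hle₂ := ht₂.minHeight_root_le
    simp only [DTree.root, DTree.height] at hshort hheight hmin
    by_cases h₁ : minHeight s₁ s₂ Qℓ t₁.root = h
    · exact ⟨t₁.root, hcov₁, h₁⟩
    · exact ⟨t₂.root, hcov₂, by omega⟩

lemma Coverable.exists_minHeight_eq_of_le {c : Config Q ι} {h : ℕ}
    (hc : Coverable s₁ s₂ Qℓ c) (hle : h ≤ minHeight s₁ s₂ Qℓ c) :
    ∃ c', Coverable s₁ s₂ Qℓ c' ∧ minHeight s₁ s₂ Qℓ c' = h := by
  obtain ⟨k, hk⟩ := Nat.exists_eq_add_of_le hle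
  induction k generalizing h with
  | zero => exact ⟨c, hc, by omega⟩
  | succ k ih =>
    obtain ⟨c', hc', hmin⟩ := ih (h := h + 1) (by omega) (by omega)
    exact hc'.exists_minHeight_eq_of_minHeight_eq_succ hmin

end CoveringTrees

section Counters

variable (A : ABVASS Q ι) (S : Finset ι) (Qℓ : Set Q)

def UnaryStepOn (c c' : Config Q ι) : Prop :=
  ∃ u, (c.1, u, c'.1) ∈ A.Tu ∧ ∀ i ∈ S, (c'.2 i : ℤ) = (c.2 i : ℤ) + u i

def BinStepOn (c c₁ c₂ : Config Q ι) : Prop :=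
  ((c.1, c₁.1, c₂.1) ∈ A.Tf ∧ (∀ i ∈ S, c₁.2 i = c.2 i) ∧ ∀ i ∈ S, c₂.2 i = c.2 i) ∨
  ((c.1, c₁.1, c₂.1) ∈ A.Ts ∧ ∀ i ∈ S, c.2 i = c₁.2 i + c₂.2 i)

abbrev IsCoveringTreeOn : DTree Q ι → Prop :=
  IsCoveringTree (UnaryStepOn A S) (BinStepOn A S) Qℓ

abbrev CoverableOn : Config Q ι → Prop :=
  Coverable (UnaryStepOn A S) (BinStepOn A S) Qℓ

noncomputable abbrev minHeightOn : Config Q ι → ℕ :=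
  minHeight (UnaryStepOn A S) (BinStepOn A S) Qℓ

variable {A S Qℓ}

lemma isDeduction_eq_validTree_univ [Fintype ι] (hz : A.Tz = ∅) :
    IsDeduction A = ValidTree (UnaryStepOn A Finset.univ) (BinStepOn A Finset.univ) := by
  have hunary : (fun c c' => UnaryStep A c c' ∨ ZeroStep A c c') = UnaryStepOn A Finset.univ := by
    funext c c'
    simp [UnaryStep, ZeroStep, UnaryStepOn, hz]
  have hbin : BinStep A = BinStepOn A Finset.univ := by
    funext c c₁ c₂
    simp [BinStep, BinStepOn, funext_iff, eq_comm]
  rw [IsDeduction, hunary, hbin]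

lemma IsCoveringTreeOn.mono {S' : Finset ι} (hS : S' ⊆ S) {D : DTree Q ι}
    (hD : IsCoveringTreeOn A S Qℓ D) : IsCoveringTreeOn A S' Qℓ D := by
  refine ⟨hD.1.mono ?_ ?_, hD.2⟩
  · rintro c c' ⟨u, hu, he⟩
    exact ⟨u, hu, fun i hi => he i (hS hi)⟩
  · rintro c c₁ c₂ (⟨hf, he₁, he₂⟩ | ⟨hs, he⟩)
    · exact .inl ⟨hf, fun i hi => he₁ i (hS hi), fun i hi => he₂ i (hS hi)⟩
    · exact .inr ⟨hs, fun i hi => he i (hS hi)⟩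

lemma UnaryStepOn.congr_left {c c' d : Config Q ι} (h : UnaryStepOn A S c d)
    (h₁ : c'.1 = c.1) (h₂ : ∀ i ∈ S, c'.2 i = c.2 i) : UnaryStepOn A S c' d := by
  obtain ⟨u, hu, he⟩ := h
  exact ⟨u, h₁ ▸ hu, fun i hi => by rw [h₂ i hi]; exact he i hi⟩

lemma BinStepOn.congr_left {c c' d₁ d₂ : Config Q ι} (h : BinStepOn A S c d₁ d₂)
    (h₁ : c'.1 = c.1) (h₂ : ∀ i ∈ S, c'.2 i = c.2 i) : BinStepOn A S c' d₁ d₂ := by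
  rcases h with ⟨hf, he₁, he₂⟩ | ⟨hs, he⟩
  · exact .inl ⟨h₁ ▸ hf, fun i hi => (he₁ i hi).trans (h₂ i hi).symm,
      fun i hi => (he₂ i hi).trans (h₂ i hi).symm⟩
  · exact .inr ⟨h₁ ▸ hs, fun i hi => (h₂ i hi).trans (he i hi)⟩

lemma IsCoveringTreeOn.setRoot {D : DTree Q ι} (hD : IsCoveringTreeOn A S Qℓ D)
    {c : Config Q ι} (h₁ : c.1 = D.root.1) (h₂ : ∀ i ∈ S, c.2 i = D.root.2 i) :
    IsCoveringTreeOn A S Qℓ (D.setRoot c) := by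
  cases D with
  | leaf c' => exact isCoveringTree_leaf.2 (h₁ ▸ isCoveringTree_leaf.1 hD)
  | node1 c' t =>
    obtain ⟨hs, ht⟩ := isCoveringTree_node1.1 hD
    exact isCoveringTree_node1.2 ⟨hs.congr_left h₁ h₂, ht⟩
  | node2 c' t₁ t₂ =>
    obtain ⟨hs, ht₁, ht₂⟩ := isCoveringTree_node2.1 hD
    exact isCoveringTree_node2.2 ⟨hs.congr_left h₁ h₂, ht₁, ht₂⟩

lemma minHeightOn_congr {c₁ c₂ : Config Q ι} (h₁ : c₁.1 = c₂.1)
    (h₂ : ∀ i ∈ S, c₁.2 i = c₂.2 i) : minHeightOn A S Qℓ c₁ = minHeightOn A S Qℓ c₂ := by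
  have transfer : ∀ {c c' : Config Q ι}, c'.1 = c.1 → (∀ i ∈ S, c'.2 i = c.2 i) →
      ∀ h, (∃ D, IsCoveringTreeOn A S Qℓ D ∧ D.root = c ∧ D.height = h) →
        ∃ D, IsCoveringTreeOn A S Qℓ D ∧ D.root = c' ∧ D.height = h := by
    rintro c c' h₁ h₂ h ⟨D, hD, rfl, rfl⟩
    exact ⟨D.setRoot c', hD.setRoot h₁ h₂, by simp, by simp⟩
  exact congrArg sInf (Set.ext fun h =>
    ⟨transfer h₁.symm (fun i hi => (h₂ i hi).symm) h, transfer h₁ h₂ h⟩)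

end Counters

lemma forall_mem_of_forall_mem_erase [DecidableEq ι] {S : Finset ι} (i : ι) {p : ι → Prop}
    (hi : p i) (h : ∀ k ∈ S.erase i, p k) : ∀ k ∈ S, p k := fun k hk => by
  rcases eq_or_ne k i with rfl | hki
  exacts [hi, h k (Finset.mem_erase.2 ⟨hki, hk⟩)]

lemma mul_two_pow_le_of_le {m h h' a : ℕ} (hh : h ≤ h') (ha : m * 2 ^ h' ≤ a) : m * 2 ^ h ≤ a :=
  le_trans (Nat.mul_le_mul_left m (Nat.pow_le_pow_right two_pos hh)) ha

section Lifting

variable [DecidableEq ι] {A : ABVASS Q ι} {S : Finset ι} {Qℓ : Set Q} {m : ℕ} {i : ι}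
  {c d d₁ d₂ : Config Q ι}

lemma unaryStepOn_update {u : ι → ℤ} (hu : (c.1, u, d.1) ∈ A.Tu)
    (he : ∀ k ∈ S.erase i, (d.2 k : ℤ) = c.2 k + u k) {a b : ℕ} (hb : (b : ℤ) = a + u i) :
    UnaryStepOn A S (c.1, Function.update c.2 i a) (d.1, Function.update d.2 i b) := by
  refine ⟨u, hu, forall_mem_of_forall_mem_erase i ?_ fun k hk => ?_⟩
  · simpa using hb
  · simpa [Finset.ne_of_mem_erase hk] using he k hk

lemma binStepOn_update_of_fork (hf : (c.1, d₁.1, d₂.1) ∈ A.Tf)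
    (he₁ : ∀ k ∈ S.erase i, d₁.2 k = c.2 k) (he₂ : ∀ k ∈ S.erase i, d₂.2 k = c.2 k) (a : ℕ) :
    BinStepOn A S (c.1, Function.update c.2 i a) (d₁.1, Function.update d₁.2 i a)
      (d₂.1, Function.update d₂.2 i a) := by
  refine .inl ⟨hf, forall_mem_of_forall_mem_erase i ?_ fun k hk => ?_,
    forall_mem_of_forall_mem_erase i ?_ fun k hk => ?_⟩
  · simp
  · simpa [Finset.ne_of_mem_erase hk] using he₁ k hk
  · simp
  · simpa [Finset.ne_of_mem_erase hk] using he₂ k hk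

lemma binStepOn_update_of_split (hs : (c.1, d₁.1, d₂.1) ∈ A.Ts)
    (he : ∀ k ∈ S.erase i, c.2 k = d₁.2 k + d₂.2 k) (a₁ a₂ : ℕ) :
    BinStepOn A S (c.1, Function.update c.2 i (a₁ + a₂)) (d₁.1, Function.update d₁.2 i a₁)
      (d₂.1, Function.update d₂.2 i a₂) := by
  refine .inr ⟨hs, forall_mem_of_forall_mem_erase i ?_ fun k hk => ?_⟩
  · simp
  · simpa [Finset.ne_of_mem_erase hk] using he k hk

/-- A tree that ignores counter `i` can be run with counter `i` tracked as soon as it starts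
from at least `m * 2 ^ height`: a unary step consumes at most `m`, and a split leaves the
right child exactly the `m * 2 ^ height` it needs and the left child the rest. -/
lemma IsCoveringTreeOn.exists_lift (hm : ∀ q u q', (q, u, q') ∈ A.Tu → ∀ k, -(m : ℤ) ≤ u k)
    {D : DTree Q ι} (hD : IsCoveringTreeOn A (S.erase i) Qℓ D)
    {a : ℕ} (ha : m * 2 ^ D.height ≤ a) :
    ∃ E, IsCoveringTreeOn A S Qℓ E ∧ E.root = (D.root.1, Function.update D.root.2 i a) ∧
      E.height = D.height := by
  induction D generalizing a with
  | leaf c =>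
    refine ⟨.leaf (c.1, Function.update c.2 i a), ?_, rfl, rfl⟩
    simpa using hD
  | node1 c t ih =>
    obtain ⟨⟨u, hu, he⟩, ht⟩ := isCoveringTree_node1.1 hD
    rw [DTree.height, pow_succ, ← mul_assoc] at ha
    have hmt : m ≤ m * 2 ^ t.height := Nat.le_mul_of_pos_right m (by positivity)
    have hui := hm _ _ _ hu i
    obtain ⟨b, hb, hbt⟩ : ∃ b : ℕ, (b : ℤ) = a + u i ∧ m * 2 ^ t.height ≤ b :=
      ⟨(a + u i).toNat, by omega, by omega⟩
    obtain ⟨E, hE, hEroot, hEheight⟩ := ih ht hbt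
    refine ⟨.node1 (c.1, Function.update c.2 i a) E, isCoveringTree_node1.2 ⟨?_, hE⟩, rfl,
      by simp [DTree.height, hEheight]⟩
    rw [hEroot]
    exact unaryStepOn_update hu he hb
  | node2 c t₁ t₂ ih₁ ih₂ =>
    obtain ⟨hs, ht₁, ht₂⟩ := isCoveringTree_node2.1 hD
    rcases hs with ⟨hf, he₁, he₂⟩ | ⟨hsplit, he⟩
    · obtain ⟨E₁, hE₁, hE₁root, hE₁height⟩ :=
        ih₁ ht₁ (mul_two_pow_le_of_le (by simp [DTree.height]; omega) ha)
      obtain ⟨E₂, hE₂, hE₂root, hE₂height⟩ :=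
        ih₂ ht₂ (mul_two_pow_le_of_le (by simp [DTree.height]; omega) ha)
      refine ⟨.node2 (c.1, Function.update c.2 i a) E₁ E₂,
        isCoveringTree_node2.2 ⟨?_, hE₁, hE₂⟩, rfl, by simp [DTree.height, hE₁height, hE₂height]⟩
      rw [hE₁root, hE₂root]
      exact binStepOn_update_of_fork hf he₁ he₂ a
    · have hsum : m * 2 ^ t₁.height + m * 2 ^ t₂.height ≤ a := by
        have := mul_two_pow_le_of_le (m := m) (le_max_left t₁.height t₂.height) le_rfl
        have := mul_two_pow_le_of_le (m := m) (le_max_right t₁.height t₂.height) le_rfl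
        rw [DTree.height, pow_succ, ← mul_assoc] at ha
        omega
      obtain ⟨a₁, rfl⟩ : ∃ a₁, a = a₁ + m * 2 ^ t₂.height := ⟨a - m * 2 ^ t₂.height, by omega⟩
      obtain ⟨E₁, hE₁, hE₁root, hE₁height⟩ := ih₁ ht₁ (a := a₁) (by omega)
      obtain ⟨E₂, hE₂, hE₂root, hE₂height⟩ := ih₂ ht₂ le_rfl
      refine ⟨.node2 (c.1, Function.update c.2 i _) E₁ E₂,
        isCoveringTree_node2.2 ⟨?_, hE₁, hE₂⟩, rfl, by simp [DTree.height, hE₁height, hE₂height]⟩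
      rw [hE₁root, hE₂root]
      exact binStepOn_update_of_split hsplit he _ _

end Lifting

section Bounds

variable {A : ABVASS Q ι} {S : Finset ι} {Qℓ : Set Q} {m : ℕ}

lemma CoverableOn.minHeightOn_le_of_le_apply [DecidableEq ι]
    (hm : ∀ q u q', (q, u, q') ∈ A.Tu → ∀ k, -(m : ℤ) ≤ u k) {i : ι} {h : ℕ}
    (herase : ∀ c, CoverableOn A (S.erase i) Qℓ c → minHeightOn A (S.erase i) Qℓ c ≤ h)
    {c : Config Q ι} (hc : CoverableOn A S Qℓ c) (hlarge : m * 2 ^ h ≤ c.2 i) :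
    minHeightOn A S Qℓ c ≤ h := by
  obtain ⟨D, hD, rfl⟩ := hc
  have hcov : CoverableOn A (S.erase i) Qℓ D.root :=
    ⟨D, IsCoveringTreeOn.mono (S.erase_subset i) hD, rfl⟩
  obtain ⟨D', hD', hroot, hheight⟩ := hcov.exists_height_eq_minHeight
  have hshort : D'.height ≤ h := hheight ▸ herase _ hcov
  obtain ⟨E, hE, hEroot, hEheight⟩ :=
    IsCoveringTreeOn.exists_lift hm hD' (mul_two_pow_le_of_le hshort hlarge)
  rw [hroot, Function.update_eq_self, Prod.mk.eta] at hEroot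
  calc minHeightOn A S Qℓ D.root ≤ E.height := hEroot ▸ hE.minHeight_root_le
    _ ≤ h := hEheight ▸ hshort

lemma CoverableOn.minHeightOn_le_add [Fintype Q] {B H₀ : ℕ}
    (hlarge : ∀ c, CoverableOn A S Qℓ c → (∃ i ∈ S, B ≤ c.2 i) → minHeightOn A S Qℓ c ≤ H₀)
    {c : Config Q ι} (hc : CoverableOn A S Qℓ c) :
    minHeightOn A S Qℓ c ≤ H₀ + Fintype.card Q * B ^ S.card := by
  classical
  let embed : Q × (S → Fin B) → Config Q ι :=
    fun x => (x.1, fun k => if hk : k ∈ S then x.2 ⟨k, hk⟩ else 0)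
  have hsub : Finset.Ioc H₀ (minHeightOn A S Qℓ c) ⊆
      Finset.univ.image (minHeightOn A S Qℓ ∘ embed) := by
    intro h hh
    rw [Finset.mem_Ioc] at hh
    obtain ⟨c', hc', hc'h⟩ := hc.exists_minHeight_eq_of_le hh.2
    have hsmall : ∀ i ∈ S, c'.2 i < B := by
      by_contra! ⟨i, hi, hB⟩
      exact (hlarge c' hc' ⟨i, hi, hB⟩).not_gt (hh.1.trans_eq hc'h.symm)
    let x : Q × (S → Fin B) := (c'.1, fun k => ⟨c'.2 k, hsmall k k.2⟩)
    have hx : minHeightOn A S Qℓ (embed x) = minHeightOn A S Qℓ c' :=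
      minHeightOn_congr rfl fun i hi => by simp [embed, x, hi]
    exact Finset.mem_image.2 ⟨x, Finset.mem_univ x, hx.trans hc'h⟩
  have hcard := (Finset.card_le_card hsub).trans Finset.card_image_le
  simp only [Nat.card_Ioc, Finset.card_univ, Fintype.card_prod, Fintype.card_fun,
    Fintype.card_fin, Fintype.card_coe] at hcard
  omega

lemma CoverableOn.minHeightOn_le_H [Fintype Q] [DecidableEq ι]
    (hm : ∀ q u q', (q, u, q') ∈ A.Tu → ∀ k, -(m : ℤ) ≤ u k)
    {c : Config Q ι} (hc : CoverableOn A S Qℓ c) :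
    minHeightOn A S Qℓ c ≤ H S.card (Fintype.card Q) m := by
  obtain ⟨n, hn⟩ : ∃ n, S.card = n := ⟨_, rfl⟩
  rw [hn]
  induction n generalizing S c with
  | zero =>
    rw [Finset.card_eq_zero] at hn
    subst hn
    simpa [H] using hc.minHeightOn_le_add (B := 0) (H₀ := 0) (by simp)
  | succ n ih =>
    have hbound := hc.minHeightOn_le_add (B := m * 2 ^ H n (Fintype.card Q) m)
      (fun c' hc' ⟨i, hi, hB⟩ => hc'.minHeightOn_le_of_le_apply hm
        (fun c'' hc'' => ih hc'' (by rw [Finset.card_erase_of_mem hi, hn, Nat.add_sub_cancel]))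
        hB)
    rw [hn] at hbound
    rw [H]
    omega

end Bounds

lemma neg_le_of_mem_Tu [Fintype ι] {A : ABVASS Q ι} (hfin : A.Tu.Finite) (q : Q) (u : ι → ℤ)
    (q' : Q) (hu : (q, u, q') ∈ A.Tu) (k : ι) :
    -((hfin.toFinset.sup fun r => Finset.univ.sup fun i => (-(r.2.1 i)).toNat : ℕ) : ℤ) ≤ u k := by
  have hrule := Finset.le_sup (f := fun r : Q × (ι → ℤ) × Q =>
    Finset.univ.sup fun i => (-(r.2.1 i)).toNat) (hfin.mem_toFinset.2 hu)
  have hcounter := Finset.le_sup (f := fun i => (-(u i)).toNat) (Finset.mem_univ k)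
  simp only at hrule hcounter
  omega

/-- If an ABVASS (no full zero tests) has a `(q_r, v₀)`-rooted
`Q_ℓ`-leaf-covering deduction tree, then it has such a deduction tree of
height at most `H d |Q| (max⁻ T_u)`. -/
theorem abvass_short_witness {Q : Type} [Fintype Q] {d : ℕ}
    (A : ABVASS Q (Fin d)) (hz : A.Tz = ∅) (hfin : A.Tu.Finite)
    (qr : Q) (v₀ : Fin d → ℕ) (Qℓ : Set Q)
    (hex : ∃ D : DTree Q (Fin d), IsDeduction A D ∧ D.root = (qr, v₀) ∧
      ∀ l ∈ D.leaves, l.1 ∈ Qℓ) :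
    ∃ D : DTree Q (Fin d), IsDeduction A D ∧ D.root = (qr, v₀) ∧
      (∀ l ∈ D.leaves, l.1 ∈ Qℓ) ∧
      D.height ≤ H d (Fintype.card Q)
        (hfin.toFinset.sup fun r => Finset.univ.sup fun i => (-(r.2.1 i)).toNat) := by
  obtain ⟨D, hD, hroot, hleaves⟩ := hex
  rw [isDeduction_eq_validTree_univ hz] at hD ⊢
  have hc : CoverableOn A Finset.univ Qℓ (qr, v₀) := ⟨D, ⟨hD, hleaves⟩, hroot⟩
  obtain ⟨D', ⟨hD', hleaves'⟩, hroot', hheight⟩ := hc.exists_height_eq_minHeight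
  refine ⟨D', hD', hroot', hleaves', ?_⟩
  simpa [hheight] using hc.minHeightOn_le_H (neg_le_of_mem_Tu hfin)
end

section
/- Let A = (Q, d, T_u, T_f, T_s, T_z) be an ABVASS₀ and let A′ be the ABVASSr obtained from A by reinterpreting each rule (q, q₁) ∈ T_z as a full reset. Then A, Q_ℓ ▷_ℓ q_r, 0 holds under the lossy semantics if and only if A′ has a (q_r, 0)-rooted Q_ℓ-leaf-covering deduction tree (a coverability witness). -/
variable {Q ι : Type}

/-- Loss rule of the lossy semantics: from `(q, v)` derive `(q, v - e_i)`. -/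
def LossStep (c c' : Config Q ι) : Prop :=
  c'.1 = c.1 ∧ ∃ i, c.2 i = c'.2 i + 1 ∧ ∀ j, j ≠ i → c.2 j = c'.2 j

/-- Full reset rule of ABVASSr: from `(q, v)` derive `(q₁, 0)`. -/
def ResetStep (A : ABVASS Q ι) (c c' : Config Q ι) : Prop :=
  (c.1, c'.1) ∈ A.Tz ∧ c'.2 = (fun _ => 0)

def Deducible (s₁ : Config Q ι → Config Q ι → Prop)
    (s₂ : Config Q ι → Config Q ι → Config Q ι → Prop) (P : Config Q ι → Prop)
    (c : Config Q ι) : Prop :=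
  ∃ t, ValidTree s₁ s₂ t ∧ t.root = c ∧ ∀ l ∈ t.leaves, P l

namespace Deducible

variable {s₁ : Config Q ι → Config Q ι → Prop} {s₂ : Config Q ι → Config Q ι → Config Q ι → Prop}
  {P : Config Q ι → Prop}

theorem leaf {c : Config Q ι} (hc : P c) : Deducible s₁ s₂ P c :=
  ⟨.leaf c, .leaf c, rfl, by simpa [DTree.leaves] using hc⟩

theorem one {c c' : Config Q ι} (hs : s₁ c c') (h : Deducible s₁ s₂ P c') :
    Deducible s₁ s₂ P c := by
  obtain ⟨t, ht, rfl, hl⟩ := h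
  exact ⟨.node1 c t, .one hs ht, rfl, hl⟩

theorem two {c c₁ c₂ : Config Q ι} (hs : s₂ c c₁ c₂) (h₁ : Deducible s₁ s₂ P c₁)
    (h₂ : Deducible s₁ s₂ P c₂) : Deducible s₁ s₂ P c := by
  obtain ⟨t₁, ht₁, rfl, hl₁⟩ := h₁
  obtain ⟨t₂, ht₂, rfl, hl₂⟩ := h₂
  refine ⟨.node2 c t₁ t₂, .two hs ht₁ ht₂, rfl, ?_⟩
  simpa [DTree.leaves, or_imp, forall_and] using And.intro hl₁ hl₂

theorem rule_induction {motive : ∀ c, Deducible s₁ s₂ P c → Prop}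
    (leaf : ∀ c (hc : P c), motive c (.leaf hc))
    (one : ∀ c c' (hs : s₁ c c') (h : Deducible s₁ s₂ P c'), motive c' h → motive c (.one hs h))
    (two : ∀ c c₁ c₂ (hs : s₂ c c₁ c₂) (h₁ : Deducible s₁ s₂ P c₁) (h₂ : Deducible s₁ s₂ P c₂),
      motive c₁ h₁ → motive c₂ h₂ → motive c (.two hs h₁ h₂))
    {c : Config Q ι} (h : Deducible s₁ s₂ P c) : motive c h := by
  obtain ⟨t, ht, rfl, hl⟩ := h
  induction ht with
  | leaf c => exact leaf c (hl c (by simp [DTree.leaves]))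
  | one hs ht ih => exact one _ _ hs ⟨_, ht, rfl, hl⟩ (ih hl)
  | two hs ht₁ ht₂ ih₁ ih₂ =>
    simp only [DTree.leaves, List.mem_append, or_imp, forall_and] at hl
    exact two _ _ _ hs ⟨_, ht₁, rfl, hl.1⟩ ⟨_, ht₂, rfl, hl.2⟩ (ih₁ hl.1) (ih₂ hl.2)

theorem mono {P' : Config Q ι → Prop} (hP : ∀ c, P c → P' c) {c : Config Q ι}
    (h : Deducible s₁ s₂ P c) : Deducible s₁ s₂ P' c := by
  induction h using Deducible.rule_induction with
  | leaf c hc => exact .leaf (hP c hc)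
  | one c c' hs _ ih => exact .one hs ih
  | two c c₁ c₂ hs _ _ ih₁ ih₂ => exact .two hs ih₁ ih₂

end Deducible

def LossyUnaryStep (A : ABVASS Q ι) (c c' : Config Q ι) : Prop :=
  UnaryStep A c c' ∨ ZeroStep A c c' ∨ LossStep c c'

def ResetUnaryStep (A : ABVASS Q ι) (c c' : Config Q ι) : Prop :=
  UnaryStep A c c' ∨ ResetStep A c c'

variable (A : ABVASS Q ι)

theorem Deducible.lossy_of_le [Finite ι] {P : Config Q ι → Prop} {q : Q} {w v : ι → ℕ}
    (h : Deducible (LossyUnaryStep A) (BinStep A) P (q, w)) (hwv : w ≤ v) :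
    Deducible (LossyUnaryStep A) (BinStep A) P (q, v) := by
  classical
  induction v using WellFoundedLT.induction with
  | _ v ih =>
    obtain rfl | hne := eq_or_ne w v
    · exact h
    obtain ⟨i, hi⟩ : ∃ i, w i < v i := by
      by_contra! hge
      exact hne (le_antisymm hwv hge)
    set v' := Function.update v i (v i - 1)
    have hlt : v' < v := update_lt_self_iff.2 (by omega)
    have hle : w ≤ v' := by
      intro j
      rcases eq_or_ne j i with rfl | hj
      · simp only [v', Function.update_self]; omega
      · simpa [v', Function.update_of_ne hj] using hwv j
    refine .one (c' := (q, v')) (Or.inr (Or.inr ⟨rfl, i, ?_, fun j hj => ?_⟩)) (ih v' hlt hle)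
    · simp only [v', Function.update_self]; omega
    · simp [v', Function.update_of_ne hj]

/-- The surplus over `c` is carried along unary and fork rules, sent to the first child of a
split, and erased by the reset that replaces a zero test; losses are simply skipped. -/
theorem Deducible.reset_of_lossy {S : Set Q} {c : Config Q ι}
    (h : Deducible (LossyUnaryStep A) (BinStep A) (fun l => l.1 ∈ S) c) {v : ι → ℕ}
    (hv : c.2 ≤ v) : Deducible (ResetUnaryStep A) (BinStep A) (fun l => l.1 ∈ S) (c.1, v) := by
  induction h using Deducible.rule_induction generalizing v with
  | leaf c hc => exact .leaf hc
  | one c c' hs _ ih =>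
    rcases hs with ⟨u, hu, hc'⟩ | ⟨hz, -, hc'⟩ | ⟨hq, i, hi, hj⟩
    · refine .one (c' := (c'.1, c'.2 + (v - c.2))) (Or.inl ⟨u, hu, fun j => ?_⟩) (ih le_self_add)
      have := hv j
      simp only [Pi.add_apply, Pi.sub_apply]
      push_cast [Nat.cast_sub this, hc' j]
      ring
    · exact .one (c' := c') (Or.inr ⟨hz, hc'⟩) (ih le_rfl)
    · have hle : c'.2 ≤ c.2 := fun j => by
        rcases eq_or_ne j i with rfl | hji
        · exact hi ▸ Nat.le_succ _
        · exact (hj j hji).ge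
      exact hq ▸ ih (hle.trans hv)
  | two c c₁ c₂ hs _ _ ih₁ ih₂ =>
    rcases hs with ⟨hf, hc₁, hc₂⟩ | ⟨hsp, hc⟩
    · exact .two (c₁ := (c₁.1, v)) (c₂ := (c₂.1, v)) (Or.inl ⟨hf, rfl, rfl⟩)
        (ih₁ (hc₁ ▸ hv)) (ih₂ (hc₂ ▸ hv))
    · refine .two (c₁ := (c₁.1, c₁.2 + (v - c.2))) (c₂ := c₂) (Or.inr ⟨hsp, ?_⟩)
        (ih₁ le_self_add) (ih₂ le_rfl)
      funext j
      have := hv j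
      have := congrFun hc j
      simp only [Pi.add_apply, Pi.sub_apply] at *
      omega

/-- Before a leaf, and before the zero test that replaces a reset, the counters are emptied
by losses. -/
theorem Deducible.lossy_of_reset [Finite ι] {S : Set Q} {c : Config Q ι}
    (h : Deducible (ResetUnaryStep A) (BinStep A) (fun l => l.1 ∈ S) c) :
    Deducible (LossyUnaryStep A) (BinStep A) (fun l => l.1 ∈ S ∧ l.2 = 0) c := by
  induction h using Deducible.rule_induction with
  | leaf c hc => exact lossy_of_le A (w := 0) (.leaf ⟨hc, rfl⟩) zero_le
  | one c c' hs _ ih =>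
    rcases hs with hu | ⟨hz, hc'⟩
    · exact .one (Or.inl hu) ih
    · exact lossy_of_le A (w := 0) (.one (Or.inr (Or.inl ⟨hz, rfl, hc'⟩)) ih) zero_le
  | two c c₁ c₂ hs _ _ ih₁ ih₂ => exact .two hs ih₁ ih₂

theorem lossy_reach_iff_topdown_cover_general {Q : Type} {d : ℕ}
    (A : ABVASS Q (Fin d)) (qr : Q) (Qℓ : Set Q) :
    (∃ D : DTree Q (Fin d),
        ValidTree (fun c c' => UnaryStep A c c' ∨ ZeroStep A c c' ∨ LossStep c c')
          (BinStep A) D ∧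
        D.root = (qr, fun _ => 0) ∧
        ∀ l ∈ D.leaves, l.1 ∈ Qℓ ∧ l.2 = (fun _ => 0)) ↔
    (∃ D : DTree Q (Fin d),
        ValidTree (fun c c' => UnaryStep A c c' ∨ ResetStep A c c')
          (BinStep A) D ∧
        D.root = (qr, fun _ => 0) ∧
        ∀ l ∈ D.leaves, l.1 ∈ Qℓ) := by
  refine ⟨fun h => ?_, Deducible.lossy_of_reset A⟩
  have h' : Deducible (LossyUnaryStep A) (BinStep A) (fun l => l.1 ∈ Qℓ) (qr, 0) :=
    Deducible.mono (fun _ hl => hl.1) h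
  exact h'.reset_of_lossy A le_rfl

/-- `A, Q_ℓ ▷_ℓ q_r, 0` holds under the lossy semantics iff the ABVASSr
obtained from `A` by reinterpreting the rules of `T_z` as full resets has
a `(q_r, 0)`-rooted `Q_ℓ`-leaf-covering deduction tree. -/
theorem lossy_reach_iff_topdown_cover {Q : Type} [Fintype Q] {d : ℕ}
    (A : ABVASS Q (Fin d)) (qr : Q) (Qℓ : Set Q) :
    (∃ D : DTree Q (Fin d),
        ValidTree (fun c c' => UnaryStep A c c' ∨ ZeroStep A c c' ∨ LossStep c c')
          (BinStep A) D ∧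
        D.root = (qr, fun _ => 0) ∧
        ∀ l ∈ D.leaves, l.1 ∈ Qℓ ∧ l.2 = (fun _ => 0)) ↔
    (∃ D : DTree Q (Fin d),
        ValidTree (fun c c' => UnaryStep A c c' ∨ ResetStep A c c')
          (BinStep A) D ∧
        D.root = (qr, fun _ => 0) ∧
        ∀ l ∈ D.leaves, l.1 ∈ Qℓ) :=
  lossy_reach_iff_topdown_cover_general A qr Qℓ
end

section
/- Let A = (Q, d, T_u, T_f, T_s, T_z) be an ABVASS₀, Q_ℓ a finite set of states, and suppose A, Q_ℓ ▷ q_r, 0 (there is a reachability witness). Then there is a reachability witness for (q_r, 0) in which, along every path from the root to a leaf, the number of applications of full zero test rules is at most |Q| − 1. -/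
/-- Deduction trees recording which rule is applied at each internal node. -/
inductive TTree (Q ι : Type) where
  | leaf : Config Q ι → TTree Q ι
  | unary : (ι → ℤ) → Config Q ι → TTree Q ι → TTree Q ι
  | zero : Config Q ι → TTree Q ι → TTree Q ι
  | fork : Config Q ι → TTree Q ι → TTree Q ι → TTree Q ι
  | split : Config Q ι → TTree Q ι → TTree Q ι → TTree Q ι

namespace TTree

variable {Q ι : Type}

def root : TTree Q ι → Config Q ι
  | .leaf c => c
  | .unary _ c _ => c
  | .zero c _ => c
  | .fork c _ _ => c
  | .split c _ _ => c

def leaves : TTree Q ι → List (Config Q ι)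
  | .leaf c => [c]
  | .unary _ _ t => t.leaves
  | .zero _ t => t.leaves
  | .fork _ t₁ t₂ => t₁.leaves ++ t₂.leaves
  | .split _ t₁ t₂ => t₁.leaves ++ t₂.leaves

/-- Maximum number of full zero test applications along a root-to-leaf path. -/
def maxZ : TTree Q ι → ℕ
  | .leaf _ => 0
  | .unary _ _ t => t.maxZ
  | .zero _ t => t.maxZ + 1
  | .fork _ t₁ t₂ => max t₁.maxZ t₂.maxZ
  | .split _ t₁ t₂ => max t₁.maxZ t₂.maxZ

end TTree

/-- Validity of a (tagged) deduction tree of an ABVASS₀. -/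
inductive TValid {Q ι : Type} (A : ABVASS Q ι) : TTree Q ι → Prop
  | leaf (c : Config Q ι) : TValid A (.leaf c)
  | unary {c : Config Q ι} {t : TTree Q ι} (u : ι → ℤ) :
      (c.1, u, t.root.1) ∈ A.Tu →
      (∀ i, (t.root.2 i : ℤ) = (c.2 i : ℤ) + u i) →
      TValid A t → TValid A (.unary u c t)
  | zero {c : Config Q ι} {t : TTree Q ι} :
      (c.1, t.root.1) ∈ A.Tz → c.2 = (fun _ => 0) → t.root.2 = (fun _ => 0) →
      TValid A t → TValid A (.zero c t)
  | fork {c : Config Q ι} {t₁ t₂ : TTree Q ι} :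
      (c.1, t₁.root.1, t₂.root.1) ∈ A.Tf →
      t₁.root.2 = c.2 → t₂.root.2 = c.2 →
      TValid A t₁ → TValid A t₂ → TValid A (.fork c t₁ t₂)
  | split {c : Config Q ι} {t₁ t₂ : TTree Q ι} :
      (c.1, t₁.root.1, t₂.root.1) ∈ A.Ts →
      c.2 = t₁.root.2 + t₂.root.2 →
      TValid A t₁ → TValid A t₂ → TValid A (.split c t₁ t₂)

namespace TTree

variable {Q ι : Type}

def configs : TTree Q ι → Set (Config Q ι)
  | .leaf c => {c}
  | .unary _ c t => insert c t.configs
  | .zero c t => insert c t.configs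
  | .fork c t₁ t₂ => insert c (t₁.configs ∪ t₂.configs)
  | .split c t₁ t₂ => insert c (t₁.configs ∪ t₂.configs)

theorem root_mem_configs (t : TTree Q ι) : t.root ∈ t.configs := by
  cases t <;> simp [root, configs]

def RepeatFree : TTree Q ι → Prop
  | .leaf _ => True
  | .unary _ c t => c ∉ t.configs ∧ t.RepeatFree
  | .zero c t => c ∉ t.configs ∧ t.RepeatFree
  | .fork c t₁ t₂ => c ∉ t₁.configs ∧ c ∉ t₂.configs ∧ t₁.RepeatFree ∧ t₂.RepeatFree
  | .split c t₁ t₂ => c ∉ t₁.configs ∧ c ∉ t₂.configs ∧ t₁.RepeatFree ∧ t₂.RepeatFree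

end TTree

open TTree

variable {Q ι : Type} {A : ABVASS Q ι}

theorem TValid.exists_subtree_of_mem_configs {t : TTree Q ι} (hv : TValid A t)
    (hr : t.RepeatFree) {c : Config Q ι} (hc : c ∈ t.configs) {L : List (Config Q ι)}
    (hL : t.leaves ⊆ L) : ∃ s, TValid A s ∧ s.root = c ∧ s.leaves ⊆ L ∧ s.RepeatFree := by
  induction hv with
  | leaf c' => exact ⟨_, .leaf c', (Set.mem_singleton_iff.mp hc).symm, hL, hr⟩
  | unary u hmem harith hvt ih =>
    rcases hc with rfl | hc
    · exact ⟨_, .unary u hmem harith hvt, rfl, hL, hr⟩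
    · exact ih hr.2 hc hL
  | zero hmem hc' ht hvt ih =>
    rcases hc with rfl | hc
    · exact ⟨_, .zero hmem hc' ht hvt, rfl, hL, hr⟩
    · exact ih hr.2 hc hL
  | fork hmem hr₁ hr₂ hv₁ hv₂ ih₁ ih₂ =>
    rcases hc with rfl | hc | hc
    · exact ⟨_, .fork hmem hr₁ hr₂ hv₁ hv₂, rfl, hL, hr⟩
    · exact ih₁ hr.2.2.1 hc (List.append_subset.1 hL).1
    · exact ih₂ hr.2.2.2 hc (List.append_subset.1 hL).2
  | split hmem hsum hv₁ hv₂ ih₁ ih₂ =>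
    rcases hc with rfl | hc | hc
    · exact ⟨_, .split hmem hsum hv₁ hv₂, rfl, hL, hr⟩
    · exact ih₁ hr.2.2.1 hc (List.append_subset.1 hL).1
    · exact ih₂ hr.2.2.2 hc (List.append_subset.1 hL).2

theorem TValid.exists_repeatFree {t : TTree Q ι} (hv : TValid A t) :
    ∃ t', TValid A t' ∧ t'.root = t.root ∧ t'.leaves ⊆ t.leaves ∧ t'.RepeatFree := by
  induction hv with
  | leaf c => exact ⟨_, .leaf c, rfl, fun _ h => h, trivial⟩
  | @unary c t u hmem harith _ ih =>
    obtain ⟨t', hv', hroot, hleaves, hrf⟩ := ih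
    by_cases hc : c ∈ t'.configs
    · exact hv'.exists_subtree_of_mem_configs hrf hc hleaves
    · exact ⟨.unary u c t', .unary u (hroot ▸ hmem) (hroot ▸ harith) hv', rfl, hleaves, hc, hrf⟩
  | @zero c t hmem hzero hzero' _ ih =>
    obtain ⟨t', hv', hroot, hleaves, hrf⟩ := ih
    by_cases hc : c ∈ t'.configs
    · exact hv'.exists_subtree_of_mem_configs hrf hc hleaves
    · exact ⟨.zero c t', .zero (hroot ▸ hmem) hzero (hroot ▸ hzero') hv', rfl, hleaves, hc, hrf⟩
  | @fork c t₁ t₂ hmem hr₁ hr₂ _ _ ih₁ ih₂ =>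
    obtain ⟨t₁', hv₁, hroot₁, hleaves₁, hrf₁⟩ := ih₁
    obtain ⟨t₂', hv₂, hroot₂, hleaves₂, hrf₂⟩ := ih₂
    have hleaves : t₁'.leaves ++ t₂'.leaves ⊆ t₁.leaves ++ t₂.leaves :=
      List.append_subset.2 ⟨List.subset_append_of_subset_left _ hleaves₁,
        List.subset_append_of_subset_right _ hleaves₂⟩
    by_cases hc₁ : c ∈ t₁'.configs
    · exact hv₁.exists_subtree_of_mem_configs hrf₁ hc₁ ((List.append_subset.1 hleaves).1)
    by_cases hc₂ : c ∈ t₂'.configs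
    · exact hv₂.exists_subtree_of_mem_configs hrf₂ hc₂ ((List.append_subset.1 hleaves).2)
    exact ⟨.fork c t₁' t₂', .fork (hroot₁ ▸ hroot₂ ▸ hmem) (hroot₁ ▸ hr₁) (hroot₂ ▸ hr₂) hv₁ hv₂,
      rfl, hleaves, hc₁, hc₂, hrf₁, hrf₂⟩
  | @split c t₁ t₂ hmem hsum _ _ ih₁ ih₂ =>
    obtain ⟨t₁', hv₁, hroot₁, hleaves₁, hrf₁⟩ := ih₁
    obtain ⟨t₂', hv₂, hroot₂, hleaves₂, hrf₂⟩ := ih₂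
    have hleaves : t₁'.leaves ++ t₂'.leaves ⊆ t₁.leaves ++ t₂.leaves :=
      List.append_subset.2 ⟨List.subset_append_of_subset_left _ hleaves₁,
        List.subset_append_of_subset_right _ hleaves₂⟩
    by_cases hc₁ : c ∈ t₁'.configs
    · exact hv₁.exists_subtree_of_mem_configs hrf₁ hc₁ ((List.append_subset.1 hleaves).1)
    by_cases hc₂ : c ∈ t₂'.configs
    · exact hv₂.exists_subtree_of_mem_configs hrf₂ hc₂ ((List.append_subset.1 hleaves).2)
    exact ⟨.split c t₁' t₂', .split (hroot₁ ▸ hroot₂ ▸ hmem) (hroot₁ ▸ hroot₂ ▸ hsum) hv₁ hv₂,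
      rfl, hleaves, hc₁, hc₂, hrf₁, hrf₂⟩

def zeroConfigs : Set (Config Q ι) := Set.range fun q => (q, fun _ => 0)

theorem zeroConfigs_finite [Finite Q] : (zeroConfigs : Set (Config Q ι)).Finite :=
  Set.finite_range _

theorem ncard_zeroConfigs_sdiff_singleton {c : Config Q ι} (hc : c ∈ zeroConfigs) :
    (zeroConfigs \ {c}).ncard = Nat.card Q - 1 := by
  rw [Set.ncard_sdiff_singleton_of_mem hc, zeroConfigs,
    Set.ncard_range_of_injective fun _ _ h => (Prod.mk.inj h).1]

theorem ncard_configs_inter_zeroConfigs_le [Finite Q] {t : TTree Q ι} {S : Set (Config Q ι)}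
    {c : Config Q ι} (hc : c ∉ t.configs) (h : t.configs ⊆ S) :
    (t.configs ∩ zeroConfigs).ncard ≤ ((S ∩ zeroConfigs) \ {c}).ncard :=
  Set.ncard_le_ncard (Set.subset_sdiff_singleton (Set.inter_subset_inter_left _ h) (hc ·.1))
    (Set.Finite.subset zeroConfigs_finite (Set.sdiff_subset.trans Set.inter_subset_right))

theorem TValid.maxZ_le_ncard [Finite Q] {t : TTree Q ι} (hv : TValid A t) (hr : t.RepeatFree) :
    t.maxZ ≤ ((t.configs ∩ zeroConfigs) \ {t.root}).ncard := by
  induction hv with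
  | leaf => exact Nat.zero_le _
  | unary _ _ _ _ ih =>
    exact (ih hr.2).trans <| (Set.ncard_sdiff_singleton_le _ _).trans <|
      ncard_configs_inter_zeroConfigs_le hr.1 (Set.subset_insert _ _)
  | @zero _ t _ _ ht _ ih =>
    have hmem : t.root ∈ t.configs ∩ zeroConfigs :=
      ⟨t.root_mem_configs, t.root.1, by rw [← ht]⟩
    calc t.maxZ + 1 ≤ ((t.configs ∩ zeroConfigs) \ {t.root}).ncard + 1 :=
          Nat.add_le_add_right (ih hr.2) 1
      _ = (t.configs ∩ zeroConfigs).ncard :=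
          Set.ncard_sdiff_singleton_add_one hmem
            (Set.Finite.subset zeroConfigs_finite Set.inter_subset_right)
      _ ≤ _ := ncard_configs_inter_zeroConfigs_le hr.1 (Set.subset_insert _ _)
  | fork _ _ _ _ _ ih₁ ih₂ | split _ _ _ _ ih₁ ih₂ =>
    exact max_le
      ((ih₁ hr.2.2.1).trans <| (Set.ncard_sdiff_singleton_le _ _).trans <|
        ncard_configs_inter_zeroConfigs_le hr.1
          (Set.subset_union_left.trans (Set.subset_insert _ _)))
      ((ih₂ hr.2.2.2).trans <| (Set.ncard_sdiff_singleton_le _ _).trans <|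
        ncard_configs_inter_zeroConfigs_le hr.2.1
          (Set.subset_union_right.trans (Set.subset_insert _ _)))

theorem TValid.maxZ_le_card_sub_one [Finite Q] {t : TTree Q ι} (hv : TValid A t)
    (hr : t.RepeatFree) (hroot : t.root.2 = fun _ => 0) : t.maxZ ≤ Nat.card Q - 1 :=
  calc t.maxZ ≤ ((t.configs ∩ zeroConfigs) \ {t.root}).ncard := hv.maxZ_le_ncard hr
    _ ≤ (zeroConfigs \ {t.root}).ncard :=
        Set.ncard_le_ncard (Set.sdiff_subset_sdiff_left Set.inter_subset_right)
          (Set.Finite.subset zeroConfigs_finite Set.sdiff_subset)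
    _ = Nat.card Q - 1 := ncard_zeroConfigs_sdiff_singleton ⟨t.root.1, by rw [← hroot]⟩

/-- If `A, Q_ℓ ▷ q_r, 0`, then there is a reachability witness for
`(q_r, 0)` in which the number of full zero tests along every root-to-leaf
path is at most `|Q| - 1`. -/
theorem few_zero_tests {Q : Type} [Fintype Q] {d : ℕ}
    (A : ABVASS Q (Fin d)) (qr : Q) (Qℓ : Set Q)
    (hex : ∃ D : TTree Q (Fin d), TValid A D ∧ D.root = (qr, fun _ => 0) ∧
      ∀ l ∈ D.leaves, l.1 ∈ Qℓ ∧ l.2 = (fun _ => 0)) :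
    ∃ D : TTree Q (Fin d), TValid A D ∧ D.root = (qr, fun _ => 0) ∧
      (∀ l ∈ D.leaves, l.1 ∈ Qℓ ∧ l.2 = (fun _ => 0)) ∧
      D.maxZ ≤ Fintype.card Q - 1 := by
  obtain ⟨D, hv, hroot, hleaves⟩ := hex
  obtain ⟨D', hv', hroot', hsub, hrf⟩ := hv.exists_repeatFree
  refine ⟨D', hv', hroot'.trans hroot, fun l hl => hleaves l (hsub hl), ?_⟩
  rw [← Nat.card_eq_fintype_card]
  exact hv'.maxZ_le_card_sub_one hrf (by rw [hroot', hroot])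
end

section
/- Let A = (Q, d, T_u, T_f, T_s, T_z) be an ABVASS₀, let A′ = (Q, d, T_u, T_f, T_s, ∅), let Root_B(X) = { q ∈ Q | B, X ▷ q, 0 } for an ABVASS₀ B and X ⊆ Q, and let T_z^{-1}(X) = { q ∈ Q | ∃ q₁ ∈ X, (q, q₁) ∈ T_z }. Then the map F(X) = Root_{A′}(Q_ℓ) ∪ Root_{A′}(X ∪ T_z^{-1}(X)) is monotone on subsets of Q, Root_A(Q_ℓ) is its least fixed point, and this least fixed point is attained by iterating F at most |Q| times starting from the empty set. -/
variable {Q ι : Type}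

/-- `Root_B(X)`: states `q` such that `B, X ▷ q, 0`. -/
def RootSet (A : ABVASS Q ι) (X : Set Q) : Set Q :=
  {q | ∃ D : DTree Q ι, IsDeduction A D ∧ D.root = (q, fun _ => 0) ∧
    ∀ l ∈ D.leaves, l.1 ∈ X ∧ l.2 = (fun _ => 0)}

/-- `A` with its full zero tests removed. -/
def eraseZ (A : ABVASS Q ι) : ABVASS Q ι := { A with Tz := ∅ }

/-- `T_z⁻¹(X)`: states with a full zero test rule into `X`. -/
def TzInv (A : ABVASS Q ι) (X : Set Q) : Set Q :=
  {q | ∃ q₁ ∈ X, (q, q₁) ∈ A.Tz}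

/-- The operator `F(X) = Root_{A'}(Q_ℓ) ∪ Root_{A'}(X ∪ T_z⁻¹(X))`,
where `A'` is `A` without full zero tests. -/
def Fop (A : ABVASS Q ι) (Qℓ : Set Q) (X : Set Q) : Set Q :=
  RootSet (eraseZ A) Qℓ ∪ RootSet (eraseZ A) (X ∪ TzInv A X)
/-!
`Root_A(Q_ℓ)` is the least set `X` with `F(X) ⊆ X`. It satisfies `F(X) ⊆ X` because deduction
trees of `A` can be grafted onto the leaves of a tree of `A'`, and a zero test can be put on top
of a tree rooted at `(q₁, 0)`. Conversely, if `F(X) ⊆ X`, cut a deduction tree of `A` just below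
every zero test, bottom-up: the subtree below a zero test `(q, 0) → (q₁, 0)` has become a tree
of `A'` with leaves in `X ∪ T_z⁻¹(X)`, so `q₁ ∈ X`, and `q ∈ T_z⁻¹(X)` may serve as a leaf.
By Knaster–Tarski, the least prefixed point is the least fixed point. The iterates of `F` from
`∅` increase, and each strict step adds a state, so they become stationary within `|Q|` steps.
-/

section KleeneIteration

variable {α : Type*}

theorem OrderHom.iterate_bot_le_lfp {L : Type*} [CompleteLattice L] (f : L →o L) (n : ℕ) :
    f^[n] ⊥ ≤ f.lfp := by
  induction n with
  | zero => exact bot_le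
  | succ n ih => rw [Function.iterate_succ_apply']; exact f.map_le_lfp ih

theorem OrderHom.exists_iterate_empty_isFixedPt [Fintype α] (f : Set α →o Set α) :
    ∃ n ≤ Fintype.card α, f (f^[n] ∅) = f^[n] ∅ := by
  by_contra! hstrict
  have hchain : Monotone fun n => f^[n] ∅ :=
    Monotone.monotone_iterate_of_le_map f.monotone (Set.empty_subset _)
  have hgrow : ∀ n ≤ Fintype.card α + 1, n ≤ (f^[n] ∅).ncard := by
    intro n hn
    induction n with
    | zero => exact Nat.zero_le _
    | succ n ih =>
      have hssub : f^[n] ∅ ⊂ f^[n + 1] ∅ := by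
        refine (hchain n.le_succ).ssubset_of_ne fun heq => hstrict n (by omega) ?_
        rw [← Function.iterate_succ_apply' f n]
        exact heq.symm
      have hlt := Set.ncard_lt_ncard hssub
      have hle := ih (by omega)
      omega
  have hbound := Set.ncard_le_card (f^[Fintype.card α + 1] ∅)
  have hlarge := hgrow _ le_rfl
  rw [Nat.card_eq_fintype_card] at hbound
  omega

theorem OrderHom.exists_iterate_empty_eq_lfp [Fintype α] (f : Set α →o Set α) :
    ∃ n ≤ Fintype.card α, f^[n] ∅ = f.lfp := by
  obtain ⟨n, hn, hfix⟩ := f.exists_iterate_empty_isFixedPt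
  exact ⟨n, hn, le_antisymm (f.iterate_bot_le_lfp n) (f.lfp_le_fixed hfix)⟩

end KleeneIteration

namespace DTree

def AllLeaves (S : Set (Config Q ι)) (D : DTree Q ι) : Prop :=
  ∀ l ∈ D.leaves, l ∈ S

@[simp]
theorem allLeaves_leaf {S : Set (Config Q ι)} {c : Config Q ι} :
    (leaf c).AllLeaves S ↔ c ∈ S := by
  simp [AllLeaves, leaves]

@[simp]
theorem allLeaves_node1 {S : Set (Config Q ι)} {c : Config Q ι} {t : DTree Q ι} :
    (node1 c t).AllLeaves S ↔ t.AllLeaves S :=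
  Iff.rfl

@[simp]
theorem allLeaves_node2 {S : Set (Config Q ι)} {c : Config Q ι} {t₁ t₂ : DTree Q ι} :
    (node2 c t₁ t₂).AllLeaves S ↔ t₁.AllLeaves S ∧ t₂.AllLeaves S :=
  List.forall_mem_append

end DTree

open DTree

namespace ValidTree

variable {step1 step1' : Config Q ι → Config Q ι → Prop}
  {step2 step2' : Config Q ι → Config Q ι → Config Q ι → Prop}

theorem mono_s14 (h1 : ∀ c c', step1 c c' → step1' c c')
    (h2 : ∀ c c₁ c₂, step2 c c₁ c₂ → step2' c c₁ c₂) {D : DTree Q ι}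
    (hD : ValidTree step1 step2 D) : ValidTree step1' step2' D := by
  induction hD with
  | leaf c => exact .leaf c
  | one hs _ ih => exact .one (h1 _ _ hs) ih
  | two hs _ _ ih₁ ih₂ => exact .two (h2 _ _ _ hs) ih₁ ih₂

theorem graft {S : Set (Config Q ι)} {D : DTree Q ι} (hD : ValidTree step1 step2 D)
    (hleaves : D.AllLeaves
      {l | ∃ E, ValidTree step1 step2 E ∧ E.root = l ∧ E.AllLeaves S}) :
    ∃ D', ValidTree step1 step2 D' ∧ D'.root = D.root ∧ D'.AllLeaves S := by
  induction hD with
  | leaf c => exact allLeaves_leaf.mp hleaves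
  | @one c t hs _ ih =>
    obtain ⟨t', ht', hroot, hS⟩ := ih (by simpa using hleaves)
    exact ⟨.node1 c t', .one (hroot ▸ hs) ht', rfl, by simpa using hS⟩
  | @two c t₁ t₂ hs _ _ ih₁ ih₂ =>
    rw [allLeaves_node2] at hleaves
    obtain ⟨t₁', ht₁', hroot₁, hS₁⟩ := ih₁ hleaves.1
    obtain ⟨t₂', ht₂', hroot₂, hS₂⟩ := ih₂ hleaves.2
    exact ⟨.node2 c t₁' t₂', .two (hroot₁ ▸ hroot₂ ▸ hs) ht₁' ht₂', rfl,
      allLeaves_node2.mpr ⟨hS₁, hS₂⟩⟩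

end ValidTree

variable {A : ABVASS Q ι} {Qℓ X Y : Set Q}

theorem mem_rootSet {q : Q} :
    q ∈ RootSet A X ↔
      ∃ D, IsDeduction A D ∧ D.root = (q, 0) ∧ D.AllLeaves (X ×ˢ {0}) :=
  Iff.rfl

theorem IsDeduction.of_eraseZ {D : DTree Q ι} (hD : IsDeduction (eraseZ A) D) :
    IsDeduction A D :=
  ValidTree.mono_s14 (fun _ _ => Or.imp_right fun hz => absurd hz.1 (Set.notMem_empty _))
    (fun _ _ _ => id) hD

theorem rootSet_mono (h : X ⊆ Y) : RootSet A X ⊆ RootSet A Y := by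
  rintro q ⟨D, hD, hroot, hleaves⟩
  exact ⟨D, hD, hroot, fun l hl => ⟨h (hleaves l hl).1, (hleaves l hl).2⟩⟩

theorem rootSet_eraseZ_subset : RootSet (eraseZ A) X ⊆ RootSet A X :=
  fun _ ⟨D, hD, hroot, hleaves⟩ => ⟨D, hD.of_eraseZ, hroot, hleaves⟩

theorem subset_rootSet : X ⊆ RootSet A X :=
  fun q hq => mem_rootSet.mpr ⟨.leaf (q, 0), .leaf _, rfl, allLeaves_leaf.mpr ⟨hq, rfl⟩⟩

theorem rootSet_rootSet : RootSet A (RootSet A X) = RootSet A X := by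
  refine subset_antisymm ?_ (rootSet_mono subset_rootSet)
  rintro q ⟨D, hD, hroot, hleaves⟩
  obtain ⟨D', hD', hroot', hleaves'⟩ := ValidTree.graft hD fun l hl => by
    obtain ⟨⟨E, hE, hEroot, hEleaves⟩, hzero⟩ := hleaves l hl
    exact ⟨E, hE, hEroot.trans (Prod.ext rfl hzero.symm), hEleaves⟩
  exact ⟨D', hD', hroot'.trans hroot, hleaves'⟩

theorem tzInv_rootSet_subset : TzInv A (RootSet A X) ⊆ RootSet A X := by
  rintro q ⟨q₁, ⟨E, hE, hroot, hleaves⟩, hz⟩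
  exact ⟨.node1 (q, 0) E, .one (Or.inr ⟨hroot ▸ hz, rfl, by rw [hroot]⟩) hE, rfl, hleaves⟩

theorem monotone_tzInv : Monotone (TzInv A) :=
  fun _ _ h _ ⟨q₁, hq₁, hz⟩ => ⟨q₁, h hq₁, hz⟩

theorem monotone_fop : Monotone (Fop A Qℓ) :=
  fun _ _ h => Set.union_subset_union_right _
    (rootSet_mono (Set.union_subset_union h (monotone_tzInv h)))

theorem fop_rootSet_subset : Fop A Qℓ (RootSet A Qℓ) ⊆ RootSet A Qℓ := by
  refine Set.union_subset rootSet_eraseZ_subset ?_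
  calc RootSet (eraseZ A) (RootSet A Qℓ ∪ TzInv A (RootSet A Qℓ))
      ⊆ RootSet A (RootSet A Qℓ ∪ TzInv A (RootSet A Qℓ)) := rootSet_eraseZ_subset
    _ ⊆ RootSet A (RootSet A Qℓ) :=
      rootSet_mono (Set.union_subset subset_rfl tzInv_rootSet_subset)
    _ = RootSet A Qℓ := rootSet_rootSet

theorem IsDeduction.exists_eraseZ (hQX : Qℓ ⊆ X)
    (hX : RootSet (eraseZ A) (X ∪ TzInv A X) ⊆ X) {D : DTree Q ι} (hD : IsDeduction A D)
    (hleaves : D.AllLeaves (Qℓ ×ˢ {0})) :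
    ∃ D', IsDeduction (eraseZ A) D' ∧ D'.root = D.root ∧
      D'.AllLeaves ((X ∪ TzInv A X) ×ˢ {0}) := by
  induction hD with
  | leaf c =>
    rw [allLeaves_leaf] at hleaves
    exact ⟨.leaf c, .leaf c, rfl, allLeaves_leaf.mpr ⟨Or.inl (hQX hleaves.1), hleaves.2⟩⟩
  | @one c t hs _ ih =>
    obtain ⟨t', ht', hroot, hS⟩ := ih (by simpa using hleaves)
    rcases hs with hunary | ⟨hz, hc, ht⟩
    · exact ⟨.node1 c t', .one (Or.inl (hroot ▸ hunary)) ht', rfl, by simpa using hS⟩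
    · have hchild : t.root.1 ∈ X := hX ⟨t', ht', hroot.trans (Prod.ext rfl ht), hS⟩
      exact ⟨.leaf c, .leaf c, rfl, allLeaves_leaf.mpr ⟨Or.inr ⟨_, hchild, hz⟩, hc⟩⟩
  | @two c t₁ t₂ hs _ _ ih₁ ih₂ =>
    rw [allLeaves_node2] at hleaves
    obtain ⟨t₁', ht₁', hroot₁, hS₁⟩ := ih₁ hleaves.1
    obtain ⟨t₂', ht₂', hroot₂, hS₂⟩ := ih₂ hleaves.2
    exact ⟨.node2 c t₁' t₂', .two (hroot₁ ▸ hroot₂ ▸ hs) ht₁' ht₂', rfl,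
      allLeaves_node2.mpr ⟨hS₁, hS₂⟩⟩

theorem rootSet_subset_of_fop_subset (hX : Fop A Qℓ X ⊆ X) : RootSet A Qℓ ⊆ X := by
  have hQX : Qℓ ⊆ X := subset_rootSet.trans (Set.subset_union_left.trans hX)
  have hX' : RootSet (eraseZ A) (X ∪ TzInv A X) ⊆ X := Set.subset_union_right.trans hX
  rintro q ⟨D, hD, hroot, hleaves⟩
  obtain ⟨D', hD', hroot', hleaves'⟩ := hD.exists_eraseZ hQX hX' hleaves
  exact hX' ⟨D', hD', hroot'.trans hroot, hleaves'⟩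

def fopHom (A : ABVASS Q ι) (Qℓ : Set Q) : Set Q →o Set Q :=
  ⟨Fop A Qℓ, monotone_fop⟩

theorem rootSet_eq_lfp_fopHom : RootSet A Qℓ = (fopHom A Qℓ).lfp :=
  le_antisymm (rootSet_subset_of_fop_subset (fopHom A Qℓ).map_lfp.le)
    ((fopHom A Qℓ).lfp_le fop_rootSet_subset)

/-- `F` is monotone, `Root_A(Q_ℓ)` is its least fixed point, and the least
fixed point is attained by iterating `F` at most `|Q|` times from `∅`. -/
theorem rootSet_least_fixed_point {Q : Type} [Fintype Q] {d : ℕ}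
    (A : ABVASS Q (Fin d)) (Qℓ : Set Q) :
    Monotone (Fop A Qℓ) ∧
    Fop A Qℓ (RootSet A Qℓ) = RootSet A Qℓ ∧
    (∀ X : Set Q, Fop A Qℓ X = X → RootSet A Qℓ ⊆ X) ∧
    (∃ n ≤ Fintype.card Q, (Fop A Qℓ)^[n] ∅ = RootSet A Qℓ) := by
  rw [rootSet_eq_lfp_fopHom]
  exact ⟨monotone_fop, (fopHom A Qℓ).map_lfp, fun _ => (fopHom A Qℓ).lfp_le_fixed,
    (fopHom A Qℓ).exists_iterate_empty_eq_lfp⟩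
end

section
/- Let A = (Q, d, T_u, T_f, T_s, ∅) be an ordinary ABVASS, Q_ℓ a finite set of states, and T(A) the associated theory. Then for all configurations (q, v) ∈ Q × ℕ^d, the root judgement A, Q_ℓ ▷ q, v holds if and only if the sequent ⊢ θ(q, v), ?Q_ℓ is provable in LL+T(A). -/
variable {Q ι : Type}

/-- Propositional linear logic formulas in negation normal form over
atoms `α`. -/
inductive Fm (α : Type) where
  | pos : α → Fm α
  | neg : α → Fm α
  | parr : Fm α → Fm α → Fm α
  | tensor : Fm α → Fm α → Fm α
  | bot : Fm α
  | one : Fm α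
  | wth : Fm α → Fm α → Fm α
  | oplus : Fm α → Fm α → Fm α
  | top : Fm α
  | zero : Fm α
  | bang : Fm α → Fm α
  | quest : Fm α → Fm α

variable {α : Type}

/-- Negation, via the De Morgan dualities. -/
def Fm.dual : Fm α → Fm α
  | .pos a => .neg a
  | .neg a => .pos a
  | .parr f g => .tensor f.dual g.dual
  | .tensor f g => .parr f.dual g.dual
  | .bot => .one
  | .one => .bot
  | .wth f g => .oplus f.dual g.dual
  | .oplus f g => .wth f.dual g.dual
  | .top => .zero
  | .zero => .top
  | .bang f => .quest f.dual
  | .quest f => .bang f.dual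

/-- MALL formulas: no exponential connectives. -/
def Fm.noExp : Fm α → Prop
  | .pos _ => True
  | .neg _ => True
  | .parr f g => f.noExp ∧ g.noExp
  | .tensor f g => f.noExp ∧ g.noExp
  | .bot => True
  | .one => True
  | .wth f g => f.noExp ∧ g.noExp
  | .oplus f g => f.noExp ∧ g.noExp
  | .top => True
  | .zero => True
  | .bang _ => False
  | .quest _ => False

/-- A theory axiom `C, p₁⊥, …, p_m⊥`: a formula `C` together with the
list of atoms `p₁, …, p_m`. -/
abbrev LAxiom (α : Type) := Fm α × List α

/-- The sequent `⊢ C, p₁⊥, …, p_m⊥` of an axiom. -/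
def axSeq (t : LAxiom α) : Multiset (Fm α) :=
  t.1 ::ₘ (t.2.map Fm.neg : Multiset (Fm α))

/-- Provability in full propositional linear logic LL extended with a
theory `T`: the rules of LL, the axiom rule, and the directed cut. -/
inductive LLT (T : Set (LAxiom α)) : Multiset (Fm α) → Prop
  | init (f : Fm α) : LLT T {f, f.dual}
  | cut {Γ Δ : Multiset (Fm α)} (f : Fm α) :
      LLT T (f ::ₘ Γ) → LLT T (f.dual ::ₘ Δ) → LLT T (Γ + Δ)
  | parr {Γ : Multiset (Fm α)} (f g : Fm α) :
      LLT T (f ::ₘ g ::ₘ Γ) → LLT T (.parr f g ::ₘ Γ)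
  | tensor {Γ Δ : Multiset (Fm α)} (f g : Fm α) :
      LLT T (f ::ₘ Γ) → LLT T (g ::ₘ Δ) → LLT T (.tensor f g ::ₘ (Γ + Δ))
  | bot {Γ : Multiset (Fm α)} : LLT T Γ → LLT T (.bot ::ₘ Γ)
  | one : LLT T {Fm.one}
  | wth {Γ : Multiset (Fm α)} (f g : Fm α) :
      LLT T (f ::ₘ Γ) → LLT T (g ::ₘ Γ) → LLT T (.wth f g ::ₘ Γ)
  | oplus₁ {Γ : Multiset (Fm α)} (f g : Fm α) :
      LLT T (f ::ₘ Γ) → LLT T (.oplus f g ::ₘ Γ)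
  | oplus₂ {Γ : Multiset (Fm α)} (f g : Fm α) :
      LLT T (g ::ₘ Γ) → LLT T (.oplus f g ::ₘ Γ)
  | top (Γ : Multiset (Fm α)) : LLT T (.top ::ₘ Γ)
  | qD {Γ : Multiset (Fm α)} (f : Fm α) :
      LLT T (f ::ₘ Γ) → LLT T (.quest f ::ₘ Γ)
  | qW {Γ : Multiset (Fm α)} (f : Fm α) :
      LLT T Γ → LLT T (.quest f ::ₘ Γ)
  | qC {Γ : Multiset (Fm α)} (f : Fm α) :
      LLT T (.quest f ::ₘ .quest f ::ₘ Γ) → LLT T (.quest f ::ₘ Γ)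
  | qP {Γ : Multiset (Fm α)} (f : Fm α) :
      (∀ g ∈ Γ, ∃ h, g = Fm.quest h) →
      LLT T (f ::ₘ Γ) → LLT T (.bang f ::ₘ Γ)
  | ax {t : LAxiom α} : t ∈ T → LLT T (axSeq t)
  | dcut {Δ : Multiset (Fm α)} {t : LAxiom α} :
      t ∈ T → LLT T ((t.1).dual ::ₘ Δ) →
      LLT T ((t.2.map Fm.neg : Multiset (Fm α)) + Δ)

/-- The unit vector `e_i` in dimension `d`. -/
def unit {d : ℕ} (i : Fin d) : Fin d → ℤ := fun j => if j = i then 1 else 0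

/-- The sequent `θ(q, v) = q⊥, (e₁⊥)^{v 1}, …, (e_d⊥)^{v d}` encoding a
configuration, over the atoms `Q ⊕ Fin d`. -/
def theta {Q : Type} {d : ℕ} (q : Q) (v : Fin d → ℕ) :
    Multiset (Fm (Q ⊕ Fin d)) :=
  Fm.neg (Sum.inl q) ::ₘ
    (Finset.univ : Finset (Fin d)).sum
      (fun i => Multiset.replicate (v i) (Fm.neg (Sum.inr i)))

/-- The theory `T(A)` associated with an ordinary ABVASS `A`: the axiom
`q⊥, q₁ ⊗ e_i` for each rule `q →^{+e_i} q₁`; the axiom `q⊥, e_i⊥, q₁`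
for each rule `q →^{-e_i} q₁`; the axiom `q⊥, q₁ ⊕ q₂` for each fork
`q → q₁ ∧ q₂`; and the axiom `q⊥, q₁ ⅋ q₂` for each split `q → q₁ + q₂`. -/
def thAx {Q : Type} {d : ℕ} (A : ABVASS Q (Fin d)) :
    Set (LAxiom (Q ⊕ Fin d)) :=
  {t | (∃ q i q₁, (q, unit i, q₁) ∈ A.Tu ∧
          t = (Fm.tensor (Fm.pos (Sum.inl q₁)) (Fm.pos (Sum.inr i)), [Sum.inl q])) ∨
       (∃ q i q₁, (q, -unit i, q₁) ∈ A.Tu ∧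
          t = (Fm.pos (Sum.inl q₁), [Sum.inl q, Sum.inr i])) ∨
       (∃ q q₁ q₂, (q, q₁, q₂) ∈ A.Tf ∧
          t = (Fm.oplus (Fm.pos (Sum.inl q₁)) (Fm.pos (Sum.inl q₂)), [Sum.inl q])) ∨
       (∃ q q₁ q₂, (q, q₁, q₂) ∈ A.Ts ∧
          t = (Fm.parr (Fm.pos (Sum.inl q₁)) (Fm.pos (Sum.inl q₂)), [Sum.inl q]))}

/-- An ABVASS is ordinary if every unary rule vector is `+e_i` or `-e_i`. -/
def Ordinary {Q : Type} {d : ℕ} (A : ABVASS Q (Fin d)) : Prop :=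
  ∀ r ∈ A.Tu, ∃ i, r.2.1 = unit i ∨ r.2.1 = -unit i

/-!
A deduction tree is turned into a proof by induction on the tree: each rule of `A` is simulated by
a directed cut against its axiom in `T(A)`, and at a split the two copies of `?Q_ℓ` coming from
the premises are contracted.

Conversely, provability implies validity in any phase model in which the axioms of `T(A)` are
valid. Take the phase space `Multiset Q × ℕ^d`, interpret the state `q` by `({q}, 0)` and the
counter `e_i` by `(0, e_i)`, and let the pole be the set of `({q}, v)` with `A, Q_ℓ ▷ q, v`. Read
bottom-up, the rules of `A` say precisely that the axioms of `T(A)` are valid, and validity of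
`⊢ θ(q, v), ?Q_ℓ` puts `({q}, v)` in the pole.
-/

open scoped Pointwise

namespace Phase

variable {M : Type*} [AddCommMonoid M] {P X Y Z : Set M}

def orth (P X : Set M) : Set M := {m | ∀ x ∈ X, m + x ∈ P}

lemma subset_orth_iff : X ⊆ orth P Y ↔ X + Y ⊆ P :=
  Set.add_subset_iff.symm

lemma mem_orth_iff {m : M} : m ∈ orth P X ↔ {m} + X ⊆ P := by
  rw [← Set.singleton_subset_iff, subset_orth_iff]

lemma subset_orth_comm : X ⊆ orth P Y ↔ Y ⊆ orth P X := by
  rw [subset_orth_iff, subset_orth_iff, add_comm]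

lemma subset_orth_orth (X : Set M) : X ⊆ orth P (orth P X) :=
  subset_orth_comm.1 subset_rfl

lemma orth_anti (h : X ⊆ Y) : orth P Y ⊆ orth P X :=
  fun _ hm x hx => hm x (h hx)

@[simp]
lemma orth_orth_orth (X : Set M) : orth P (orth P (orth P X)) = orth P X :=
  (orth_anti (subset_orth_orth X)).antisymm (subset_orth_orth _)

@[simp]
lemma orth_orth_univ : orth P (orth P Set.univ) = Set.univ :=
  Set.eq_univ_of_univ_subset (subset_orth_orth _)

lemma orth_union (X Y : Set M) : orth P (X ∪ Y) = orth P X ∩ orth P Y := by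
  ext m
  simp only [orth, Set.mem_union, Set.mem_inter_iff, Set.mem_ofPred_eq, or_imp, forall_and]

lemma add_orth_orth_subset_iff : Z + orth P (orth P X) ⊆ P ↔ Z + X ⊆ P := by
  rw [← subset_orth_iff, orth_orth_orth, subset_orth_iff]

lemma orth_add_orth_orth (X Y : Set M) :
    orth P (orth P (orth P X) + orth P (orth P Y)) = orth P (X + Y) := by
  ext m
  rw [mem_orth_iff, mem_orth_iff, ← add_assoc, add_orth_orth_subset_iff, add_right_comm,
    add_orth_orth_subset_iff, add_right_comm, add_assoc]

lemma add_subset_orth_orth (X Y : Set M) :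
    orth P (orth P X) + orth P (orth P Y) ⊆ orth P (orth P (X + Y)) := by
  rw [← orth_add_orth_orth]
  exact subset_orth_orth _

lemma mem_orth_orth_singleton {x y : M} :
    x ∈ orth P (orth P {y}) ↔ ∀ m, m + y ∈ P → m + x ∈ P := by
  simp only [orth, Set.mem_singleton_iff, forall_eq, Set.mem_ofPred_eq]
  exact forall_congr' fun m => by rw [add_comm x]

lemma multiset_sum_orth_orth_subset {β : Type*} (s : Multiset β) (k : β → Set M) :
    (s.map fun b => orth P (orth P (k b))).sum ⊆ orth P (orth P (s.map k).sum) := by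
  induction s using Multiset.induction with
  | empty => exact subset_orth_orth _
  | cons b s ih =>
    simp only [Multiset.map_cons, Multiset.sum_cons]
    exact (Set.add_subset_add_left ih).trans (add_subset_orth_orth _ _)

lemma multiset_sum_subset_addSubmonoid {β : Type*} {S : AddSubmonoid M} {s : Multiset β}
    {k : β → Set M} (h : ∀ b ∈ s, k b ⊆ S) : (s.map k).sum ⊆ S := by
  induction s using Multiset.induction with
  | empty => simp [Set.zero_subset, S.zero_mem]
  | cons b s ih =>
    simp only [Multiset.map_cons, Multiset.sum_cons, Set.add_subset_iff]
    exact fun x hx y hy => S.add_mem (h b (s.mem_cons_self b) hx)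
      (ih (fun c hc => h c (Multiset.mem_cons_of_mem hc)) hy)

/-- The idempotents of the unit `orth P (orth P 0) = orth P P`. -/
def idem (P : Set M) : AddSubmonoid M where
  carrier := {m | m + m = m ∧ m ∈ orth P P}
  zero_mem' := ⟨add_zero 0, fun x hx => by rwa [zero_add]⟩
  add_mem' := by
    rintro a b ⟨ha, ha'⟩ ⟨hb, hb'⟩
    refine ⟨by rw [add_add_add_comm, ha, hb], fun x hx => ?_⟩
    rw [add_assoc]
    exact ha' _ (hb' x hx)

lemma idem_add_subset : (idem P : Set M) + P ⊆ P :=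
  subset_orth_iff.1 fun _ hm => hm.2

variable (P) (val : α → Set M)

def interp : Fm α → Set M
  | .pos a => orth P (orth P (val a))
  | .neg a => orth P (val a)
  | .parr f g => orth P (orth P (interp f) + orth P (interp g))
  | .tensor f g => orth P (orth P (interp f + interp g))
  | .bot => orth P 0
  | .one => orth P (orth P 0)
  | .wth f g => interp f ∩ interp g
  | .oplus f g => orth P (orth P (interp f ∪ interp g))
  | .top => Set.univ
  | .zero => orth P Set.univ
  | .bang f => orth P (orth P (interp f ∩ idem P))
  | .quest f => orth P (orth P (interp f) ∩ idem P)

def ctx : Multiset (Fm α) →+ Set M :=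
  Multiset.sumAddMonoidHom.comp (Multiset.mapAddMonoidHom fun f => orth P (interp P val f))

def Valid (Γ : Multiset (Fm α)) : Prop := ctx P val Γ ⊆ P

variable {P val}

@[simp]
lemma orth_orth_interp (f : Fm α) : orth P (orth P (interp P val f)) = interp P val f := by
  cases f with
  | wth f g =>
    refine subset_antisymm (Set.subset_inter ?_ ?_) (subset_orth_orth _)
    · exact (orth_anti (orth_anti Set.inter_subset_left)).trans (orth_orth_interp f).subset
    · exact (orth_anti (orth_anti Set.inter_subset_right)).trans (orth_orth_interp g).subset
  | top => exact orth_orth_univ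
  | _ => exact orth_orth_orth _

lemma interp_dual (f : Fm α) : interp P val f.dual = orth P (interp P val f) := by
  induction f with
  | wth f g ihf ihg => simp only [Fm.dual, interp, ihf, ihg, orth_union, orth_orth_interp]
  | _ => simp only [Fm.dual, interp, orth_orth_interp, orth_orth_orth, orth_orth_univ,
      ← orth_union, *]

variable {Γ Δ : Multiset (Fm α)} {f : Fm α}

lemma ctx_apply : ctx P val Γ = (Γ.map fun f => orth P (interp P val f)).sum := rfl

@[simp]
lemma ctx_cons : ctx P val (f ::ₘ Γ) = orth P (interp P val f) + ctx P val Γ := by simp [ctx]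

@[simp]
lemma ctx_singleton : ctx P val {f} = orth P (interp P val f) := by simp [ctx]

lemma ctx_map_neg (s : Multiset α) :
    ctx P val (s.map Fm.neg) = (s.map fun a => orth P (orth P (val a))).sum := by
  simp [ctx, Multiset.map_map, Function.comp_def, interp]

lemma valid_cons_iff : Valid P val (f ::ₘ Γ) ↔ ctx P val Γ ⊆ interp P val f := by
  rw [Valid, ctx_cons, add_comm, ← subset_orth_iff, orth_orth_interp]

lemma valid_cut (h₁ : Valid P val (f ::ₘ Γ)) (h₂ : Valid P val (f.dual ::ₘ Δ)) :
    Valid P val (Γ + Δ) := by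
  rw [valid_cons_iff] at h₁ h₂
  rw [interp_dual] at h₂
  rw [Valid, map_add, add_comm]
  exact (Set.add_subset_add_left h₁).trans (subset_orth_iff.1 h₂)

lemma orth_interp_quest_subset (f : Fm α) :
    orth P (interp P val f.quest) ⊆ orth P (orth P (orth P (interp P val f.quest) ∩ idem P)) := by
  have hJ : orth P (interp P val f) ∩ idem P ⊆ orth P (interp P val f.quest) :=
    subset_orth_orth _
  exact orth_anti (orth_anti (Set.subset_inter hJ Set.inter_subset_right))

/-- This is what makes promotion sound. -/
lemma ctx_subset_orth_orth_inter_idem (hΓ : ∀ g ∈ Γ, ∃ h, g = Fm.quest h) :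
    ctx P val Γ ⊆ orth P (orth P (ctx P val Γ ∩ idem P)) := by
  have hquest : ∀ g ∈ Γ, orth P (interp P val g) ⊆
      orth P (orth P (orth P (interp P val g) ∩ idem P)) := by
    intro g hg
    obtain ⟨h, rfl⟩ := hΓ g hg
    exact orth_interp_quest_subset h
  calc ctx P val Γ
      ⊆ (Γ.map fun g => orth P (orth P (orth P (interp P val g) ∩ idem P))).sum :=
        Set.multiset_sum_subset_multiset_sum _ _ _ hquest
    _ ⊆ orth P (orth P (Γ.map fun g => orth P (interp P val g) ∩ idem P).sum) :=
        multiset_sum_orth_orth_subset _ _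
    _ ⊆ orth P (orth P (ctx P val Γ ∩ idem P)) := by
        refine orth_anti (orth_anti (Set.subset_inter ?_ ?_))
        · exact Set.multiset_sum_subset_multiset_sum _ _ _ fun _ _ => Set.inter_subset_left
        · exact multiset_sum_subset_addSubmonoid fun _ _ => Set.inter_subset_right

lemma zero_mem_ctx (h : ∀ f ∈ Γ, (0 : M) ∈ orth P (interp P val f)) : (0 : M) ∈ ctx P val Γ := by
  rw [ctx_apply]
  simpa using Set.multiset_sum_mem_multiset_sum Γ _ (fun _ => 0) h

lemma zero_mem_orth_interp_quest (h : (0 : M) ∈ orth P (interp P val f)) :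
    (0 : M) ∈ orth P (interp P val f.quest) :=
  subset_orth_orth _ ⟨h, (idem P).zero_mem⟩

lemma valid_axSeq {t : LAxiom α} (h : ((t.2 : Multiset α).map val).sum ⊆ interp P val t.1) :
    Valid P val (axSeq t) := by
  rw [axSeq, valid_cons_iff, ← Multiset.map_coe, ctx_map_neg]
  exact (multiset_sum_orth_orth_subset _ _).trans
    ((orth_anti (orth_anti h)).trans (orth_orth_interp _).subset)

theorem valid_of_LLT {T : Set (LAxiom α)} (hT : ∀ t ∈ T, Valid P val (axSeq t))
    (h : LLT T Γ) : Valid P val Γ := by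
  induction h with
  | init f =>
    rw [Multiset.insert_eq_cons, valid_cons_iff, ctx_singleton, interp_dual, orth_orth_interp]
  | cut f _ _ ih₁ ih₂ =>
    exact valid_cut ih₁ ih₂
  | parr f g _ ih =>
    rw [Valid, ctx_cons, ctx_cons] at ih
    rwa [valid_cons_iff, interp, subset_orth_iff, add_comm, add_assoc]
  | tensor f g _ _ ih₁ ih₂ =>
    rw [valid_cons_iff, map_add]
    exact (Set.add_subset_add (valid_cons_iff.1 ih₁) (valid_cons_iff.1 ih₂)).trans
      (subset_orth_orth _)
  | bot _ ih => rwa [valid_cons_iff, interp, subset_orth_iff, add_zero]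
  | one =>
    rw [← Multiset.cons_zero, valid_cons_iff, map_zero, interp]
    exact subset_orth_orth _
  | wth f g _ _ ih₁ ih₂ =>
    exact valid_cons_iff.2 (Set.subset_inter (valid_cons_iff.1 ih₁) (valid_cons_iff.1 ih₂))
  | oplus₁ f g _ ih =>
    exact valid_cons_iff.2 ((valid_cons_iff.1 ih).trans
      (Set.subset_union_left.trans (subset_orth_orth _)))
  | oplus₂ f g _ ih =>
    exact valid_cons_iff.2 ((valid_cons_iff.1 ih).trans
      (Set.subset_union_right.trans (subset_orth_orth _)))
  | top Γ => exact valid_cons_iff.2 (Set.subset_univ _)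
  | qD f _ ih =>
    exact valid_cons_iff.2 ((valid_cons_iff.1 ih).trans
      ((orth_orth_interp f).symm.subset.trans (orth_anti Set.inter_subset_left)))
  | qW f _ ih =>
    rw [valid_cons_iff, interp, subset_orth_iff, add_comm]
    exact (Set.add_subset_add Set.inter_subset_right ih).trans idem_add_subset
  | qC f _ ih =>
    rw [valid_cons_iff, interp, subset_orth_iff, Set.add_subset_iff]
    intro c hc j hj
    rw [Valid, ctx_cons, ctx_cons] at ih
    have hj' : j ∈ orth P (interp P val f.quest) := subset_orth_orth _ hj
    have := ih (Set.add_mem_add hj' (Set.add_mem_add hj' hc))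
    rwa [← add_assoc, hj.2.1, add_comm] at this
  | qP f hΓ _ ih =>
    rw [valid_cons_iff, interp]
    exact (ctx_subset_orth_orth_inter_idem hΓ).trans
      (orth_anti (orth_anti (Set.inter_subset_inter_left _ (valid_cons_iff.1 ih))))
  | ax ht => exact hT _ ht
  | dcut ht _ ih =>
    exact valid_cut (hT _ ht) ih

end Phase

section RootJudgement

variable {A : ABVASS Q ι} {Qℓ : Finset Q} {c c₁ c₂ : Config Q ι}

/-- The root judgement `A, Qℓ ▷ c`. -/
def RootJudgement (A : ABVASS Q ι) (Qℓ : Finset Q) (c : Config Q ι) : Prop :=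
  ∃ D : DTree Q ι, IsDeduction A D ∧ D.root = c ∧ ∀ l ∈ D.leaves, l.1 ∈ Qℓ ∧ l.2 = fun _ => 0

lemma RootJudgement.leaf {q : Q} (hq : q ∈ Qℓ) : RootJudgement A Qℓ (q, 0) :=
  ⟨.leaf (q, 0), .leaf _, rfl, fun _ hl => List.mem_singleton.1 hl ▸ ⟨hq, rfl⟩⟩

lemma RootJudgement.unary (hc : UnaryStep A c c₁) (h : RootJudgement A Qℓ c₁) :
    RootJudgement A Qℓ c := by
  obtain ⟨D, hD, rfl, hleaves⟩ := h
  exact ⟨.node1 c D, .one (Or.inl hc) hD, rfl, hleaves⟩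

lemma RootJudgement.binary (hc : BinStep A c c₁ c₂) (h₁ : RootJudgement A Qℓ c₁)
    (h₂ : RootJudgement A Qℓ c₂) : RootJudgement A Qℓ c := by
  obtain ⟨D₁, hD₁, rfl, hleaves₁⟩ := h₁
  obtain ⟨D₂, hD₂, rfl, hleaves₂⟩ := h₂
  refine ⟨.node2 c D₁ D₂, .two hc hD₁ hD₂, rfl, fun l hl => ?_⟩
  rcases List.mem_append.1 hl with hl | hl
  exacts [hleaves₁ l hl, hleaves₂ l hl]

end RootJudgement

section Vectors

variable {d : ℕ} {i : Fin d} {v w : Fin d → ℕ}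

lemma natCast_eq_add_unit_iff : (∀ j, (w j : ℤ) = v j + unit i j) ↔ w = v + Pi.single i 1 := by
  simp only [funext_iff, Pi.add_apply, Pi.single_apply, unit]
  refine forall_congr' fun j => ?_
  split_ifs <;> omega

lemma natCast_eq_add_neg_unit_iff :
    (∀ j, (w j : ℤ) = v j + (-unit i) j) ↔ v = w + Pi.single i 1 := by
  simp only [funext_iff, Pi.add_apply, Pi.neg_apply, Pi.single_apply, unit]
  refine forall_congr' fun j => ?_
  split_ifs <;> omega

end Vectors

namespace LLT

variable {β : Type} {T : Set (LAxiom α)} {Γ : Multiset (Fm α)}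

lemma weaken_quests (s : Multiset β) (g : β → Fm α) (h : LLT T Γ) :
    LLT T (Γ + s.map fun b => (g b).quest) := by
  induction s using Multiset.induction with
  | empty => simpa using h
  | cons b s ih => simpa using qW _ ih

lemma contract_quests (s : Multiset β) (g : β → Fm α)
    (h : LLT T (Γ + s.map (fun b => (g b).quest) + s.map fun b => (g b).quest)) :
    LLT T (Γ + s.map fun b => (g b).quest) := by
  induction s using Multiset.induction generalizing Γ with
  | empty => simpa using h
  | cons b s ih =>
    simp only [Multiset.map_cons, Multiset.add_cons, Multiset.cons_add] at h ⊢
    simpa using ih (Γ := (g b).quest ::ₘ Γ) (by simpa using qC _ h)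

end LLT

section Theory

variable {d : ℕ} {A : ABVASS Q (Fin d)} {q q₁ q₂ : Q} {i : Fin d} {v v₁ v₂ : Fin d → ℕ}
  {Γ Γ₁ Γ₂ : Multiset (Fm (Q ⊕ Fin d))}

def counters (v : Fin d → ℕ) : Multiset (Fm (Q ⊕ Fin d)) :=
  ∑ i, Multiset.replicate (v i) (Fm.neg (Sum.inr i))

lemma theta_eq_cons : theta q v = Fm.neg (Sum.inl q) ::ₘ counters v := rfl

lemma counters_add :
    (counters (v₁ + v₂) : Multiset (Fm (Q ⊕ Fin d))) = counters v₁ + counters v₂ := by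
  simp [counters, Multiset.replicate_add, Finset.sum_add_distrib]

lemma counters_single :
    (counters (Pi.single i 1) : Multiset (Fm (Q ⊕ Fin d))) = {Fm.neg (Sum.inr i)} := by
  rw [counters, Finset.sum_eq_single i] <;> simp +contextual

lemma counters_add_single :
    (counters (v + Pi.single i 1) : Multiset (Fm (Q ⊕ Fin d))) =
      Fm.neg (Sum.inr i) ::ₘ counters v := by
  rw [counters_add, counters_single, add_comm, Multiset.singleton_add]

@[simp]
lemma counters_zero : (counters 0 : Multiset (Fm (Q ⊕ Fin d))) = 0 := by
  simp [counters]

lemma LLT.theta_of_inc (hr : (q, unit i, q₁) ∈ A.Tu)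
    (h : LLT (thAx A) (theta q₁ (v + Pi.single i 1) + Γ)) : LLT (thAx A) (theta q v + Γ) := by
  have hax : (Fm.tensor (.pos (.inl q₁)) (.pos (.inr i)), [Sum.inl q]) ∈ thAx A :=
    Or.inl ⟨q, i, q₁, hr, rfl⟩
  rw [theta_eq_cons, counters_add_single] at h
  simpa [theta_eq_cons] using LLT.dcut hax (LLT.parr _ _ (by simpa [Fm.dual] using h))

lemma LLT.theta_of_dec (hr : (q, -unit i, q₁) ∈ A.Tu)
    (h : LLT (thAx A) (theta q₁ v + Γ)) : LLT (thAx A) (theta q (v + Pi.single i 1) + Γ) := by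
  have hax : (Fm.pos (.inl q₁), [Sum.inl q, Sum.inr i]) ∈ thAx A :=
    Or.inr (Or.inl ⟨q, i, q₁, hr, rfl⟩)
  rw [theta_eq_cons] at h
  simpa [theta_eq_cons, counters_add_single, ← Multiset.cons_coe] using
    LLT.dcut hax (by simpa [Fm.dual] using h)

lemma LLT.theta_of_fork (hr : (q, q₁, q₂) ∈ A.Tf) (h₁ : LLT (thAx A) (theta q₁ v + Γ))
    (h₂ : LLT (thAx A) (theta q₂ v + Γ)) : LLT (thAx A) (theta q v + Γ) := by
  have hax : (Fm.oplus (.pos (.inl q₁)) (.pos (.inl q₂)), [Sum.inl q]) ∈ thAx A :=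
    Or.inr (Or.inr (Or.inl ⟨q, q₁, q₂, hr, rfl⟩))
  rw [theta_eq_cons] at h₁ h₂
  simpa [theta_eq_cons] using
    LLT.dcut hax (LLT.wth _ _ (by simpa [Fm.dual] using h₁) (by simpa [Fm.dual] using h₂))

lemma LLT.theta_of_split (hr : (q, q₁, q₂) ∈ A.Ts) (h₁ : LLT (thAx A) (theta q₁ v₁ + Γ₁))
    (h₂ : LLT (thAx A) (theta q₂ v₂ + Γ₂)) : LLT (thAx A) (theta q (v₁ + v₂) + (Γ₁ + Γ₂)) := by
  have hax : (Fm.parr (.pos (.inl q₁)) (.pos (.inl q₂)), [Sum.inl q]) ∈ thAx A :=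
    Or.inr (Or.inr (Or.inr ⟨q, q₁, q₂, hr, rfl⟩))
  rw [theta_eq_cons] at h₁ h₂
  have :=
    LLT.dcut hax (LLT.tensor _ _ (by simpa [Fm.dual] using h₁) (by simpa [Fm.dual] using h₂))
  simp only [theta_eq_cons, counters_add, Multiset.cons_add]
  rw [add_add_add_comm]
  simpa [Fm.dual] using this

lemma LLT.theta_zero_add_quests {T : Set (LAxiom (Q ⊕ Fin d))} {Qℓ : Finset Q} (hq : q ∈ Qℓ) :
    LLT T (theta q 0 + Qℓ.val.map fun ql => Fm.quest (Fm.pos (Sum.inl ql))) := by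
  obtain ⟨s, hs⟩ := Multiset.exists_cons_of_mem (show q ∈ Qℓ.val from hq)
  have := (LLT.qD _ (LLT.init (T := T) (Fm.pos (Sum.inl q)))).weaken_quests s
    (fun ql => Fm.pos (Sum.inl ql))
  simpa [hs, theta_eq_cons, Fm.dual, Multiset.cons_swap] using this

theorem LLT.theta_root_of_isDeduction (hz : A.Tz = ∅) (hord : Ordinary A) {Qℓ : Finset Q}
    {D : DTree Q (Fin d)} (hD : IsDeduction A D)
    (hleaves : ∀ l ∈ D.leaves, l.1 ∈ Qℓ ∧ l.2 = fun _ => 0) :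
    LLT (thAx A)
      (theta D.root.1 D.root.2 + Qℓ.val.map fun ql => Fm.quest (Fm.pos (Sum.inl ql))) := by
  induction hD with
  | leaf c =>
    obtain ⟨hc, hc0⟩ := hleaves c (List.mem_singleton_self c)
    exact hc0 ▸ LLT.theta_zero_add_quests hc
  | one hstep _ ih =>
    have ih := ih hleaves
    rcases hstep with ⟨u, hu, hcast⟩ | ⟨hzero, -⟩
    · obtain ⟨i, rfl | rfl⟩ := hord _ hu
      · rw [natCast_eq_add_unit_iff] at hcast
        exact LLT.theta_of_inc hu (hcast ▸ ih)
      · rw [natCast_eq_add_neg_unit_iff] at hcast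
        exact hcast ▸ LLT.theta_of_dec hu ih
    · exact absurd hzero (hz ▸ Set.notMem_empty _)
  | two hstep _ _ ih₁ ih₂ =>
    have ih₁ := ih₁ fun l hl => hleaves l (List.mem_append_left _ hl)
    have ih₂ := ih₂ fun l hl => hleaves l (List.mem_append_right _ hl)
    rcases hstep with ⟨hfork, h₁, h₂⟩ | ⟨hsplit, hsum⟩
    · exact LLT.theta_of_fork hfork (h₁ ▸ ih₁) (h₂ ▸ ih₂)
    · have := LLT.theta_of_split hsplit ih₁ ih₂
      rw [← add_assoc] at this
      exact hsum ▸ LLT.contract_quests _ _ this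

end Theory

section PhaseModel

open Phase

variable {d : ℕ} {A : ABVASS Q (Fin d)} {Qℓ : Finset Q} {q q₁ q₂ : Q} {i : Fin d}
  {m m₁ m₂ : Multiset Q × (Fin d → ℕ)}

/-- A configuration `(q, v)` is the element `({q}, v)` of the phase space; the pole consists of
the configurations accepted by `A`. -/
def pole (A : ABVASS Q (Fin d)) (Qℓ : Finset Q) : Set (Multiset Q × (Fin d → ℕ)) :=
  {m | ∃ q, m.1 = {q} ∧ RootJudgement A Qℓ (q, m.2)}

def atomPoint : Q ⊕ Fin d → Multiset Q × (Fin d → ℕ) :=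
  Sum.elim (fun q => ({q}, 0)) (fun i => (0, Pi.single i 1))

lemma add_state_mem_pole_iff :
    m + ({q}, 0) ∈ pole A Qℓ ↔ m.1 = 0 ∧ RootJudgement A Qℓ (q, m.2) := by
  simp only [pole, Set.mem_ofPred_eq, Prod.fst_add, Prod.snd_add, add_zero]
  constructor
  · rintro ⟨q', h, hj⟩
    have h0 : m.1 = 0 := by simpa using congrArg Multiset.card h
    rw [h0, zero_add, Multiset.singleton_inj] at h
    exact ⟨h0, h ▸ hj⟩
  · rintro ⟨h0, hj⟩
    exact ⟨q, by rw [h0, zero_add], hj⟩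

lemma add_mem_pole_of_inc (hr : (q, unit i, q₁) ∈ A.Tu)
    (h : m + ({q₁}, Pi.single i 1) ∈ pole A Qℓ) : m + ({q}, 0) ∈ pole A Qℓ := by
  rw [show m + ({q₁}, Pi.single i 1) = m + (0, Pi.single i 1) + ({q₁}, 0) by
    ext <;> simp [add_comm], add_state_mem_pole_iff] at h
  refine add_state_mem_pole_iff.2 ⟨by simpa using h.1, h.2.unary ⟨unit i, hr, ?_⟩⟩
  exact natCast_eq_add_unit_iff.2 rfl

lemma add_mem_pole_of_dec (hr : (q, -unit i, q₁) ∈ A.Tu)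
    (h : m + ({q₁}, 0) ∈ pole A Qℓ) : m + ({q}, Pi.single i 1) ∈ pole A Qℓ := by
  rw [show m + ({q}, Pi.single i 1) = m + (0, Pi.single i 1) + ({q}, 0) by
    ext <;> simp [add_comm], add_state_mem_pole_iff]
  rw [add_state_mem_pole_iff] at h
  refine ⟨by simpa using h.1, h.2.unary ⟨-unit i, hr, ?_⟩⟩
  exact natCast_eq_add_neg_unit_iff.2 rfl

lemma add_mem_pole_of_fork (hr : (q, q₁, q₂) ∈ A.Tf) (h₁ : m + ({q₁}, 0) ∈ pole A Qℓ)
    (h₂ : m + ({q₂}, 0) ∈ pole A Qℓ) : m + ({q}, 0) ∈ pole A Qℓ := by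
  rw [add_state_mem_pole_iff] at h₁ h₂ ⊢
  exact ⟨h₁.1, RootJudgement.binary (c₁ := (q₁, m.2)) (c₂ := (q₂, m.2))
    (Or.inl ⟨hr, rfl, rfl⟩) h₁.2 h₂.2⟩

lemma add_mem_pole_of_split (hr : (q, q₁, q₂) ∈ A.Ts) (h₁ : m₁ + ({q₁}, 0) ∈ pole A Qℓ)
    (h₂ : m₂ + ({q₂}, 0) ∈ pole A Qℓ) : m₁ + m₂ + ({q}, 0) ∈ pole A Qℓ := by
  rw [add_state_mem_pole_iff] at h₁ h₂ ⊢
  exact ⟨by simp [h₁.1, h₂.1], RootJudgement.binary (Or.inr ⟨hr, rfl⟩) h₁.2 h₂.2⟩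

lemma valid_thAx {t : LAxiom (Q ⊕ Fin d)} (ht : t ∈ thAx A) :
    Valid (pole A Qℓ) (fun a => {atomPoint a}) (axSeq t) := by
  refine valid_axSeq ?_
  rcases ht with ⟨q, i, q₁, hr, rfl⟩ | ⟨q, i, q₁, hr, rfl⟩ | ⟨q, q₁, q₂, hr, rfl⟩ |
    ⟨q, q₁, q₂, hr, rfl⟩ <;>
  simp only [Multiset.map_coe, List.map, Multiset.sum_coe, List.sum_cons, List.sum_nil,
    add_zero, interp, atomPoint, Sum.elim_inl, Sum.elim_inr, orth_add_orth_orth, orth_union,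
    orth_orth_orth, Set.singleton_add_singleton, Prod.mk_add_mk, zero_add,
    Set.singleton_subset_iff, mem_orth_orth_singleton]
  · exact fun m => add_mem_pole_of_inc hr
  · exact fun m => add_mem_pole_of_dec hr
  · rintro m ⟨h₁, h₂⟩
    rw [add_comm]
    exact add_mem_pole_of_fork hr (h₁ _ rfl) (h₂ _ rfl)
  · rintro _ ⟨m₁, h₁, m₂, h₂, rfl⟩
    rw [add_comm]
    exact add_mem_pole_of_split hr (h₁ _ rfl) (h₂ _ rfl)

lemma mem_ctx_counters (v : Fin d → ℕ) :
    ((0 : Multiset Q), v) ∈ ctx (pole A Qℓ) (fun a => {atomPoint a}) (counters v) := by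
  have hv : ((0 : Multiset Q), v) = ∑ i, v i • atomPoint (Sum.inr i) := by
    refine Prod.ext (by simp [atomPoint, Prod.fst_sum]) ?_
    simpa [atomPoint, Prod.snd_sum] using pi_eq_sum_univ' v
  rw [hv, counters, map_sum]
  refine Set.finsetSum_mem_finsetSum _ _ _ fun i _ => ?_
  rw [← Multiset.nsmul_singleton, map_nsmul, ctx_singleton]
  exact Set.nsmul_mem_nsmul (subset_orth_orth _ rfl)

theorem rootJudgement_of_LLT {v : Fin d → ℕ}
    (h : LLT (thAx A) (theta q v + Qℓ.val.map fun ql => Fm.quest (Fm.pos (Sum.inl ql)))) :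
    RootJudgement A Qℓ (q, v) := by
  have hθ : ({q}, v) ∈ ctx (pole A Qℓ) (fun a => {atomPoint a}) (theta q v) := by
    rw [theta_eq_cons, ctx_cons]
    have hq : atomPoint (Sum.inl q) ∈
        orth (pole A Qℓ) (orth (pole A Qℓ) {atomPoint (Sum.inl q)}) :=
      subset_orth_orth _ rfl
    simpa [atomPoint, interp] using Set.add_mem_add hq (mem_ctx_counters v)
  have hquests : 0 ∈ ctx (pole A Qℓ) (fun a => {atomPoint a})
      (Qℓ.val.map fun ql => Fm.quest (Fm.pos (Sum.inl ql))) := by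
    refine zero_mem_ctx fun f hf => ?_
    obtain ⟨ql, hql, rfl⟩ := Multiset.mem_map.1 hf
    refine zero_mem_orth_interp_quest ?_
    rw [interp, orth_orth_orth]
    rintro _ rfl
    exact ⟨ql, by simp [atomPoint], RootJudgement.leaf hql⟩
  obtain ⟨q', hq', hj⟩ := valid_of_LLT (fun t ht => valid_thAx ht) h
    (by simpa using Set.add_mem_add hθ hquests)
  rw [Multiset.singleton_inj] at hq'
  exact hq' ▸ hj

end PhaseModel

theorem abvass_reach_iff_llt_general {Q : Type} {d : ℕ}
    (A : ABVASS Q (Fin d)) (hz : A.Tz = ∅) (hord : Ordinary A)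
    (Qℓ : Finset Q) (q : Q) (v : Fin d → ℕ) :
    (∃ D : DTree Q (Fin d), IsDeduction A D ∧ D.root = (q, v) ∧
        ∀ l ∈ D.leaves, l.1 ∈ Qℓ ∧ l.2 = (fun _ => 0)) ↔
    LLT (thAx A)
      (theta q v +
        Multiset.map (fun ql => Fm.quest (Fm.pos (Sum.inl ql))) Qℓ.val) := by
  constructor
  · rintro ⟨D, hD, hroot, hleaves⟩
    simpa [hroot] using LLT.theta_root_of_isDeduction hz hord hD hleaves
  · exact rootJudgement_of_LLT

/-- For an ordinary ABVASS `A` (no full zero tests) and all configurations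
`(q, v)`, the root judgement `A, Q_ℓ ▷ q, v` holds iff the sequent
`⊢ θ(q, v), ?Q_ℓ` is provable in LL+T(A). -/
theorem abvass_reach_iff_llt {Q : Type} [Fintype Q] {d : ℕ}
    (A : ABVASS Q (Fin d)) (hz : A.Tz = ∅) (hord : Ordinary A)
    (Qℓ : Finset Q) (q : Q) (v : Fin d → ℕ) :
    (∃ D : DTree Q (Fin d), IsDeduction A D ∧ D.root = (q, v) ∧
        ∀ l ∈ D.leaves, l.1 ∈ Qℓ ∧ l.2 = (fun _ => 0)) ↔
    LLT (thAx A)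
      (theta q v +
        Multiset.map (fun ql => Fm.quest (Fm.pos (Sum.inl ql))) Qℓ.val) :=
  abvass_reach_iff_llt_general A hz hord Qℓ q v
end
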